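/- arXiv:2404.07281 — 8 statements merged into one kernel-verified Lean document; each statement's English description precedes it below -/
import Mathlib

section
/- Let d ≥ 1, let ψ ∈ ℂ^d be a unit vector, let τ ≥ 1, and let L be a Hermitian d×d matrix with 0 ⪯ L ⪯ I, Lψ = ψ, and ⟨v, Lv⟩ ≤ (1 − 1/τ)·‖v‖² for every vector v orthogonal to ψ. Then for every positive semidefinite d×d matrix ρ with Tr(ρ) = 1 and every ε ≥ 0: (i) if Tr(Lρ) ≥ 1 − ε then ⟨ψ, ρψ⟩ ≥ 1 − τε; (ii) Tr(Lρ) ≥ ⟨ψ, ρψ⟩, so in particular if ⟨ψ, ρψ⟩ ≥ 1 − ε then Tr(Lρ) ≥ 1 − ε. -/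
open Matrix Complex
open scoped ComplexOrder

/-!
With `P = ψ ψ*`, the hypotheses on `L` amount to the operator sandwich
`P ⪯ L ⪯ P + (1 - 1/τ) (1 - P)`: both differences annihilate `ψ`, and on `ψ^⊥` they reduce to
`⟨v, L v⟩ ≥ 0` and to the spectral gap. Pairing with a density matrix `ρ` is monotone for `⪯`
and `Tr (P ρ) = ⟨ψ, ρ ψ⟩ =: F`, so `F ≤ Tr (L ρ) ≤ 1 - (1 - F) / τ`.
-/

namespace Matrix

variable {n 𝕜 : Type*} [RCLike 𝕜]

lemma isHermitian_vecMulVec_self_star (ψ : n → 𝕜) : (vecMulVec ψ (star ψ)).IsHermitian := by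
  rw [IsHermitian, conjTranspose_vecMulVec, star_star]

variable [Fintype n]

lemma dotProduct_star_self_eq_sum_norm_sq (v : n → 𝕜) :
    star v ⬝ᵥ v = ((∑ i, ‖v i‖ ^ 2 : ℝ) : 𝕜) := by
  simp only [dotProduct, Pi.star_apply, RCLike.star_def, RCLike.conj_mul]
  push_cast
  rfl

lemma trace_mul_vecMulVec {α : Type*} [CommSemiring α] (M : Matrix n n α) (u v : n → α) :
    (M * vecMulVec u v).trace = v ⬝ᵥ (M *ᵥ u) := by
  rw [mul_vecMulVec, trace_vecMulVec, dotProduct_comm]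

lemma trace_vecMulVec_mul {α : Type*} [CommSemiring α] (M : Matrix n n α) (u v : n → α) :
    (vecMulVec u v * M).trace = v ⬝ᵥ (M *ᵥ u) := by
  rw [trace_mul_comm, trace_mul_vecMulVec]

lemma vecMulVec_self_star_mulVec (ψ v : n → 𝕜) :
    vecMulVec ψ (star ψ) *ᵥ v = (star ψ ⬝ᵥ v) • ψ := by
  rw [vecMulVec_mulVec, op_smul_eq_smul]

lemma PosSemidef.trace_mul_nonneg {A B : Matrix n n 𝕜} (hA : A.PosSemidef) (hB : B.PosSemidef) :
    0 ≤ (A * B).trace := by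
  obtain ⟨m, v, rfl⟩ := posSemidef_iff_eq_sum_vecMulVec.mp hB
  rw [Finset.mul_sum, trace_sum]
  exact Finset.sum_nonneg fun i _ => trace_mul_vecMulVec A _ _ ▸ hA.dotProduct_mulVec_nonneg (v i)

lemma re_trace_mul_le_of_posSemidef_sub {A B ρ : Matrix n n 𝕜} (hAB : (B - A).PosSemidef)
    (hρ : ρ.PosSemidef) : RCLike.re (A * ρ).trace ≤ RCLike.re (B * ρ).trace := by
  have := (RCLike.nonneg_iff.mp (hAB.trace_mul_nonneg hρ)).1
  rwa [sub_mul, trace_sub, map_sub, sub_nonneg] at this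

variable {ψ : n → 𝕜}

/- Writing `w = v + ⟨ψ, w⟩ ψ` with `v ⊥ ψ`, both cross terms of `⟨w, A w⟩` vanish because
`A ψ = 0` and `A` is Hermitian, so `⟨w, A w⟩ = ⟨v, A v⟩`. -/
lemma posSemidef_of_mulVec_eq_zero {A : Matrix n n 𝕜} (hA : A.IsHermitian)
    (hψ : star ψ ⬝ᵥ ψ = 1) (hAψ : A *ᵥ ψ = 0)
    (hA_orth : ∀ v, star ψ ⬝ᵥ v = 0 → 0 ≤ RCLike.re (star v ⬝ᵥ (A *ᵥ v))) : A.PosSemidef := by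
  refine .of_dotProduct_mulVec_nonneg hA fun w => ?_
  set v := w - (star ψ ⬝ᵥ w) • ψ
  have hv : star ψ ⬝ᵥ v = 0 := by
    rw [dotProduct_sub, dotProduct_smul, hψ, smul_eq_mul, mul_one, sub_self]
  have hψA : star ψ ᵥ* A = 0 := by rw [← hA.eq, ← star_mulVec, hAψ, star_zero]
  have hAv : A *ᵥ v = A *ᵥ w := by rw [mulVec_sub, mulVec_smul, hAψ, smul_zero, sub_zero]
  have hquad : star v ⬝ᵥ (A *ᵥ v) = star w ⬝ᵥ (A *ᵥ w) := by
    rw [hAv, star_sub, sub_dotProduct, star_smul, smul_dotProduct, dotProduct_mulVec (star ψ),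
      hψA, zero_dotProduct, smul_zero, sub_zero]
  rw [RCLike.nonneg_iff, ← hquad]
  exact ⟨hA_orth v hv, hA.im_star_dotProduct_mulVec_self v⟩

lemma posSemidef_sub_vecMulVec_self_star {L : Matrix n n 𝕜} (hL : L.PosSemidef)
    (hψ : star ψ ⬝ᵥ ψ = 1) (hLψ : L *ᵥ ψ = ψ) : (L - vecMulVec ψ (star ψ)).PosSemidef := by
  refine posSemidef_of_mulVec_eq_zero (hL.1.sub (isHermitian_vecMulVec_self_star ψ)) hψ ?_
    fun v hv => ?_
  · rw [sub_mulVec, hLψ, vecMulVec_self_star_mulVec, hψ, one_smul, sub_self]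
  · rw [sub_mulVec, vecMulVec_self_star_mulVec, hv, zero_smul, sub_zero]
    exact (RCLike.nonneg_iff.mp (hL.dotProduct_mulVec_nonneg v)).1

lemma posSemidef_vecMulVec_self_star_add_smul_sub {L : Matrix n n 𝕜} [DecidableEq n] (c : ℝ)
    (hL : L.IsHermitian) (hψ : star ψ ⬝ᵥ ψ = 1) (hLψ : L *ᵥ ψ = ψ)
    (hgap : ∀ v, star ψ ⬝ᵥ v = 0 → RCLike.re (star v ⬝ᵥ (L *ᵥ v)) ≤ c * ∑ i, ‖v i‖ ^ 2) :
    (vecMulVec ψ (star ψ) + c • (1 - vecMulVec ψ (star ψ)) - L).PosSemidef := by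
  have hP := isHermitian_vecMulVec_self_star ψ
  refine posSemidef_of_mulVec_eq_zero
    ((hP.add ((isHermitian_one.sub hP).smul (IsSelfAdjoint.all c))).sub hL) hψ ?_ fun v hv => ?_
  · simp only [sub_mulVec, add_mulVec, smul_mulVec, one_mulVec, hLψ, vecMulVec_self_star_mulVec,
      hψ, one_smul, sub_self, smul_zero, add_zero]
  · simp only [sub_mulVec, add_mulVec, smul_mulVec, one_mulVec, vecMulVec_self_star_mulVec, hv,
      zero_smul, zero_add, sub_zero, dotProduct_sub, dotProduct_smul,
      dotProduct_star_self_eq_sum_norm_sq, map_sub, RCLike.smul_re, RCLike.ofReal_re]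
    linarith [hgap v hv]

variable {ρ : Matrix n n 𝕜}

lemma re_dotProduct_mulVec_le_re_trace_mul {L : Matrix n n 𝕜} (hL : L.PosSemidef)
    (hψ : star ψ ⬝ᵥ ψ = 1) (hLψ : L *ᵥ ψ = ψ) (hρ : ρ.PosSemidef) :
    RCLike.re (star ψ ⬝ᵥ (ρ *ᵥ ψ)) ≤ RCLike.re (L * ρ).trace := by
  simpa only [trace_vecMulVec_mul] using
    re_trace_mul_le_of_posSemidef_sub (posSemidef_sub_vecMulVec_self_star hL hψ hLψ) hρ

lemma re_trace_mul_le_of_gap {L : Matrix n n 𝕜} (c : ℝ) (hL : L.IsHermitian)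
    (hψ : star ψ ⬝ᵥ ψ = 1) (hLψ : L *ᵥ ψ = ψ)
    (hgap : ∀ v, star ψ ⬝ᵥ v = 0 → RCLike.re (star v ⬝ᵥ (L *ᵥ v)) ≤ c * ∑ i, ‖v i‖ ^ 2)
    (hρ : ρ.PosSemidef) (hρ_trace : ρ.trace = 1) :
    RCLike.re (L * ρ).trace ≤
      RCLike.re (star ψ ⬝ᵥ (ρ *ᵥ ψ)) + c * (1 - RCLike.re (star ψ ⬝ᵥ (ρ *ᵥ ψ))) := by
  classical
  have := re_trace_mul_le_of_posSemidef_sub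
    (posSemidef_vecMulVec_self_star_add_smul_sub c hL hψ hLψ hgap) hρ
  simpa only [add_mul, smul_mul_assoc, sub_mul, one_mul, trace_add, trace_smul, trace_sub,
    trace_vecMulVec_mul, hρ_trace, map_add, RCLike.smul_re, map_sub, RCLike.one_re] using this

end Matrix

theorem stmt_0_general (d : ℕ)
    (ψ : Fin d → ℂ) (hψ : ∑ i, ‖ψ i‖ ^ 2 = 1)
    (τ : ℝ) (hτ : 1 ≤ τ)
    (L : Matrix (Fin d) (Fin d) ℂ)
    (hLherm : L.IsHermitian)
    (hL0 : L.PosSemidef)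
    (hLψ : L *ᵥ ψ = ψ)
    (hgap : ∀ v : Fin d → ℂ, star ψ ⬝ᵥ v = 0 →
      (star v ⬝ᵥ (L *ᵥ v)).re ≤ (1 - 1 / τ) * ∑ i, ‖v i‖ ^ 2)
    (ρ : Matrix (Fin d) (Fin d) ℂ) (hρ : ρ.PosSemidef) (hρtr : ρ.trace = 1)
    (ε : ℝ) :
    ((1 - ε ≤ (L * ρ).trace.re → 1 - τ * ε ≤ (star ψ ⬝ᵥ (ρ *ᵥ ψ)).re) ∧
      (star ψ ⬝ᵥ (ρ *ᵥ ψ)).re ≤ (L * ρ).trace.re) := by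
  have hψ1 : star ψ ⬝ᵥ ψ = 1 := by
    rw [dotProduct_star_self_eq_sum_norm_sq, hψ, RCLike.ofReal_one]
  have upper := re_trace_mul_le_of_gap _ hLherm hψ1 hLψ hgap hρ hρtr
  refine ⟨fun h => ?_, re_dotProduct_mulVec_le_re_trace_mul hL0 hψ1 hLψ hρ⟩
  have hτ0 : 0 < τ := zero_lt_one.trans_le hτ
  have : (1 - (star ψ ⬝ᵥ (ρ *ᵥ ψ)).re) / τ ≤ ε := by
    simp only [RCLike.re_to_complex] at upper
    rw [div_eq_mul_one_div]
    linarith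
  rw [div_le_iff₀ hτ0] at this
  linarith

/-- An approximate projector `L` onto a unit vector `ψ` (Hermitian,
`0 ⪯ L ⪯ I`, `Lψ = ψ`, and `⟨v, Lv⟩ ≤ (1 - 1/τ)‖v‖²` on the orthogonal complement of `ψ`)
certifies fidelity: for any density matrix `ρ` and `ε ≥ 0`,
(i) `Tr(Lρ) ≥ 1 - ε` implies `⟨ψ, ρψ⟩ ≥ 1 - τε`, and (ii) `Tr(Lρ) ≥ ⟨ψ, ρψ⟩`. -/
theorem stmt_0 (d : ℕ) (hd : 1 ≤ d)
    (ψ : Fin d → ℂ) (hψ : ∑ i, ‖ψ i‖ ^ 2 = 1)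
    (τ : ℝ) (hτ : 1 ≤ τ)
    (L : Matrix (Fin d) (Fin d) ℂ)
    (hLherm : L.IsHermitian)
    (hL0 : L.PosSemidef)
    (hL1 : (1 - L).PosSemidef)
    (hLψ : L *ᵥ ψ = ψ)
    (hgap : ∀ v : Fin d → ℂ, star ψ ⬝ᵥ v = 0 →
      (star v ⬝ᵥ (L *ᵥ v)).re ≤ (1 - 1 / τ) * ∑ i, ‖v i‖ ^ 2)
    (ρ : Matrix (Fin d) (Fin d) ℂ) (hρ : ρ.PosSemidef) (hρtr : ρ.trace = 1)
    (ε : ℝ) (hε : 0 ≤ ε) :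
    ((1 - ε ≤ (L * ρ).trace.re → 1 - τ * ε ≤ (star ψ ⬝ᵥ (ρ *ᵥ ψ)).re) ∧
      (star ψ ⬝ᵥ (ρ *ᵥ ψ)).re ≤ (L * ρ).trace.re) :=
  stmt_0_general d ψ hψ τ hτ L hLherm hL0 hLψ hgap ρ hρ hρtr ε
end

section
/- Let π be a strictly positive probability distribution on {0,1}^n, let φ : {0,1}^n → ℝ, and define ψ ∈ ℂ^{{0,1}^n} by ψ(x) = √π(x)·e^{iφ(x)}. Fix 1 ≤ m ≤ n and set N = ∑_{k=1}^m C(n,k). Define the matrix L indexed by {0,1}^n × {0,1}^n by: L(x,y) = (1/N)·(√(π(x)π(y))/(π(x)+π(y)))·e^{i(φ(x)−φ(y))} whenever 1 ≤ d(x,y) ≤ m; L(x,x) = (1/N)·∑_{x' : 1 ≤ d(x,x') ≤ m} π(x)/(π(x)+π(x')); and L(x,y) = 0 whenever d(x,y) > m. Then L is Hermitian and Lψ = ψ. -/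
/-!
Let `G` be the graph on `{0,1}^n` joining strings at Hamming distance between `1` and `m`; it
is regular of degree `N`. The off-diagonal entries of `L` are `c(x,y) e^{i(φ x - φ y)}` with
`c(x,y) = √(π x π y) / (N (π x + π y))` real and symmetric, and the diagonal is real, so `L` is
Hermitian. Applied to `ψ`, the phases cancel and the neighbour `y` contributes
`π y / (N (π x + π y)) ψ x`, while the diagonal contributes `π x / (N (π x + π y)) ψ x` for each
neighbour `y`; the two add up to `ψ x / N` per neighbour, hence to `ψ x` in total.
-/

open Matrix Complex Finset

noncomputable section

section Hamming

variable {ι : Type*} [Fintype ι]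

variable (ι) in
def hammingBallGraph (m : ℕ) : SimpleGraph (ι → Bool) where
  Adj x y := 1 ≤ hammingDist x y ∧ hammingDist x y ≤ m
  symm := ⟨fun x y h => by rwa [hammingDist_comm]⟩
  loopless := ⟨fun x h => by simp at h⟩

instance (m : ℕ) : DecidableRel (hammingBallGraph ι m).Adj :=
  fun x y => inferInstanceAs (Decidable (1 ≤ hammingDist x y ∧ hammingDist x y ≤ m))

variable [DecidableEq ι]

theorem card_filter_hammingDist_eq (x : ι → Bool) (k : ℕ) :
    #{y | hammingDist x y = k} = (Fintype.card ι).choose k := by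
  rw [← card_univ, ← card_powersetCard]
  refine card_nbij' (fun y => ({i | x i ≠ y i} : Finset ι))
    (fun s i => if i ∈ s then !x i else x i) ?_ ?_ ?_ ?_
  · intro y hy
    simpa [mem_powersetCard, hammingDist] using hy
  · intro s hs
    simp only [mem_coe, mem_powersetCard] at hs
    simp only [coe_filter, mem_univ, true_and, hammingDist, ← hs.2, Set.mem_ofPred_eq]
    congr 1
    ext i
    by_cases h : i ∈ s <;> simp [h]
  · intro y _
    funext i
    simp only [mem_filter, mem_univ, true_and]
    cases x i <;> cases y i <;> simp
  · intro s _
    ext i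
    by_cases h : i ∈ s <;> simp [h]

theorem card_filter_hammingDist_mem_Icc (x : ι → Bool) (m : ℕ) :
    #{y | 1 ≤ hammingDist x y ∧ hammingDist x y ≤ m} =
      ∑ k ∈ Icc 1 m, (Fintype.card ι).choose k := by
  rw [card_eq_sum_card_fiberwise (f := hammingDist x) (t := Icc 1 m)
    (fun y hy => by simpa using hy)]
  refine sum_congr rfl fun k hk => ?_
  rw [← card_filter_hammingDist_eq x k, filter_filter]
  congr 1
  refine filter_congr fun y _ => ?_
  rw [mem_Icc] at hk
  constructor
  · exact And.right
  · rintro rfl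
    exact ⟨hk, rfl⟩

theorem neighborFinset_hammingBallGraph (m : ℕ) (x : ι → Bool) :
    (hammingBallGraph ι m).neighborFinset x =
      ({y | 1 ≤ hammingDist x y ∧ hammingDist x y ≤ m} : Finset (ι → Bool)) :=
  SimpleGraph.neighborFinset_eq_filter _

theorem isRegularOfDegree_hammingBallGraph (m : ℕ) :
    (hammingBallGraph ι m).IsRegularOfDegree (∑ k ∈ Icc 1 m, (Fintype.card ι).choose k) :=
  fun x => by
    rw [← SimpleGraph.card_neighborFinset_eq_degree, neighborFinset_hammingBallGraph,
      card_filter_hammingDist_mem_Icc]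

end Hamming

section ShadowOverlap

variable {ι : Type*}

def amplitude (π φ : ι → ℝ) (x : ι) : ℂ :=
  ((Real.sqrt (π x) : ℝ) : ℂ) * exp (I * (φ x : ℝ))

theorem star_ofReal_mul_exp_I_mul (r a : ℝ) :
    star ((r : ℂ) * exp (I * (a : ℂ))) = r * exp (I * ((-a : ℝ) : ℂ)) := by
  rw [star_mul', star_def, conj_ofReal, ← exp_conj, map_mul, conj_I, conj_ofReal]
  push_cast
  ring_nf

theorem sqrt_mul_div_add_mul_sqrt {p q : ℝ} (hp : 0 ≤ p) (hq : 0 ≤ q) :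
    Real.sqrt (p * q) / (p + q) * Real.sqrt q = q / (p + q) * Real.sqrt p := by
  rw [Real.sqrt_mul hp, div_mul_eq_mul_div, mul_assoc, Real.mul_self_sqrt hq]
  ring

theorem hopping_mul_amplitude (c : ℝ) {π : ι → ℝ} (hπ : ∀ x, 0 ≤ π x) (φ : ι → ℝ) (x y : ι) :
    ((c * (Real.sqrt (π x * π y) / (π x + π y)) : ℝ) : ℂ) * exp (I * ((φ x - φ y : ℝ) : ℂ)) *
      amplitude π φ y = ((c * (π y / (π x + π y)) : ℝ) : ℂ) * amplitude π φ x := by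
  have hphase :
      exp (I * ((φ x - φ y : ℝ) : ℂ)) * exp (I * (φ y : ℝ)) = exp (I * (φ x : ℝ)) := by
    rw [← exp_add]
    push_cast
    ring_nf
  calc _ = ((c * (Real.sqrt (π x * π y) / (π x + π y) * Real.sqrt (π y)) : ℝ) : ℂ) *
        (exp (I * ((φ x - φ y : ℝ) : ℂ)) * exp (I * (φ y : ℝ))) := by
        rw [amplitude]
        push_cast
        ring
    _ = _ := by
      rw [sqrt_mul_div_add_mul_sqrt (hπ x) (hπ y), hphase, amplitude]
      push_cast
      ring

variable [Fintype ι] [DecidableEq ι] (G : SimpleGraph ι) [DecidableRel G.Adj]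

def shadowOverlapObservable (c : ℝ) (π φ : ι → ℝ) : Matrix ι ι ℂ :=
  diagonal (fun x => ((c * ∑ y ∈ G.neighborFinset x, π x / (π x + π y) : ℝ) : ℂ)) +
    of fun x y => if G.Adj x y then
      ((c * (Real.sqrt (π x * π y) / (π x + π y)) : ℝ) : ℂ) * exp (I * ((φ x - φ y : ℝ) : ℂ))
    else 0

variable {G}

theorem eq_shadowOverlapObservable {c : ℝ} {π φ : ι → ℝ} {L : Matrix ι ι ℂ}
    (hdiag : ∀ x, L x x = ((c * ∑ y ∈ G.neighborFinset x, π x / (π x + π y) : ℝ) : ℂ))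
    (hadj : ∀ x y, G.Adj x y → L x y =
      ((c * (Real.sqrt (π x * π y) / (π x + π y)) : ℝ) : ℂ) * exp (I * ((φ x - φ y : ℝ) : ℂ)))
    (hfar : ∀ x y, x ≠ y → ¬ G.Adj x y → L x y = 0) :
    L = shadowOverlapObservable G c π φ := by
  ext x y
  rcases eq_or_ne x y with rfl | hxy
  · simp [shadowOverlapObservable, hdiag]
  · by_cases h : G.Adj x y
    · simp [shadowOverlapObservable, hxy, h, hadj x y h]
    · simp [shadowOverlapObservable, hxy, h, hfar x y hxy h]

theorem isHermitian_shadowOverlapObservable (c : ℝ) (π φ : ι → ℝ) :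
    (shadowOverlapObservable G c π φ).IsHermitian := by
  refine (isHermitian_diagonal_of_self_adjoint _ ?_).add (IsHermitian.ext fun x y => ?_)
  · ext x
    exact conj_ofReal _
  · by_cases h : G.Adj x y
    · simp only [of_apply, h, h.symm, if_true, star_ofReal_mul_exp_I_mul, neg_sub,
        mul_comm (π y), add_comm (π y)]
    · have h' : ¬ G.Adj y x := fun h' => h h'.symm
      simp [h, h']

theorem shadowOverlapObservable_mulVec_amplitude (c : ℝ) {π : ι → ℝ} (hπ : ∀ x, 0 < π x)
    (φ : ι → ℝ) :
    shadowOverlapObservable G c π φ *ᵥ amplitude π φ =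
      fun x => ((c * G.degree x : ℝ) : ℂ) * amplitude π φ x := by
  ext x
  have hsum : ∑ y ∈ G.neighborFinset x, (π x / (π x + π y) + π y / (π x + π y)) =
      G.degree x := by
    rw [← G.card_neighborFinset_eq_degree, card_eq_sum_ones, Nat.cast_sum]
    refine sum_congr rfl fun y _ => ?_
    rw [← add_div, div_self (add_pos (hπ x) (hπ y)).ne', Nat.cast_one]
  rw [shadowOverlapObservable, add_mulVec, Pi.add_apply, mulVec_diagonal]
  simp only [mulVec, dotProduct, of_apply, ite_mul, zero_mul]
  rw [← sum_filter, ← G.neighborFinset_eq_filter,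
    sum_congr rfl fun y _ => hopping_mul_amplitude c (fun z => (hπ z).le) φ x y, ← sum_mul,
    ← hsum]
  push_cast
  rw [sum_add_distrib, mul_add, add_mul, ← mul_sum]

theorem shadowOverlapObservable_mulVec_amplitude_of_isRegularOfDegree {d : ℕ}
    (hG : G.IsRegularOfDegree d) {c : ℝ} (hc : c * d = 1) {π : ι → ℝ} (hπ : ∀ x, 0 < π x)
    (φ : ι → ℝ) :
    shadowOverlapObservable G c π φ *ᵥ amplitude π φ = amplitude π φ := by
  rw [shadowOverlapObservable_mulVec_amplitude c hπ]
  ext x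
  rw [hG.degree_eq, hc, ofReal_one, one_mul]

end ShadowOverlap

end

theorem stmt_1_general (n m : ℕ) (hm1 : 1 ≤ m) (hmn : m ≤ n)
    (π : (Fin n → Bool) → ℝ) (hπpos : ∀ x, 0 < π x)
    (φ : (Fin n → Bool) → ℝ)
    (ψ : (Fin n → Bool) → ℂ)
    (hψ : ∀ x, ψ x = (Real.sqrt (π x) : ℝ) * Complex.exp (Complex.I * (φ x : ℝ)))
    (N : ℝ) (hN : N = ∑ k ∈ Finset.Icc 1 m, (Nat.choose n k : ℝ))
    (L : Matrix (Fin n → Bool) (Fin n → Bool) ℂ)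
    (hLoff : ∀ x y, 1 ≤ hammingDist x y → hammingDist x y ≤ m →
      L x y = ((1 / N * (Real.sqrt (π x * π y) / (π x + π y)) : ℝ) : ℂ) *
        Complex.exp (Complex.I * ((φ x - φ y : ℝ) : ℂ)))
    (hLdiag : ∀ x, L x x = ((1 / N *
      ∑ x' ∈ Finset.univ.filter
        (fun x' => 1 ≤ hammingDist x x' ∧ hammingDist x x' ≤ m),
          π x / (π x + π x') : ℝ) : ℂ))
    (hLfar : ∀ x y, m < hammingDist x y → L x y = 0) :
    L.IsHermitian ∧ L *ᵥ ψ = ψ := by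
  have hL : L = shadowOverlapObservable (hammingBallGraph (Fin n) m) (1 / N) π φ :=
    eq_shadowOverlapObservable (by simpa only [neighborFinset_hammingBallGraph] using hLdiag)
      (fun x y ⟨h1, hm⟩ => hLoff x y h1 hm)
      (fun x y hxy h => hLfar x y (not_le.1 fun hm => h ⟨hammingDist_pos.2 hxy, hm⟩))
  have hN0 : N ≠ 0 := by
    rw [hN]
    refine (sum_pos (fun k hk => ?_) ⟨1, mem_Icc.2 ⟨le_rfl, hm1⟩⟩).ne'
    exact_mod_cast Nat.choose_pos ((mem_Icc.1 hk).2.trans hmn)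
  have hNdeg : 1 / N * ((∑ k ∈ Icc 1 m, (Fintype.card (Fin n)).choose k : ℕ) : ℝ) = 1 := by
    rw [Fintype.card_fin, Nat.cast_sum, ← hN, one_div_mul_cancel hN0]
  subst hL
  rw [show ψ = amplitude π φ from funext hψ]
  exact ⟨isHermitian_shadowOverlapObservable _ _ _,
    shadowOverlapObservable_mulVec_amplitude_of_isRegularOfDegree
      (isRegularOfDegree_hammingBallGraph m) hNdeg hπpos φ⟩

/-- The level-`m` shadow-overlap observable `L` associated with the
state `ψ(x) = √π(x) e^{iφ(x)}` is Hermitian and fixes `ψ`. -/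
theorem stmt_1 (n m : ℕ) (hm1 : 1 ≤ m) (hmn : m ≤ n)
    (π : (Fin n → Bool) → ℝ) (hπpos : ∀ x, 0 < π x) (hπsum : ∑ x, π x = 1)
    (φ : (Fin n → Bool) → ℝ)
    (ψ : (Fin n → Bool) → ℂ)
    (hψ : ∀ x, ψ x = (Real.sqrt (π x) : ℝ) * Complex.exp (Complex.I * (φ x : ℝ)))
    (N : ℝ) (hN : N = ∑ k ∈ Finset.Icc 1 m, (Nat.choose n k : ℝ))
    (L : Matrix (Fin n → Bool) (Fin n → Bool) ℂ)
    (hLoff : ∀ x y, 1 ≤ hammingDist x y → hammingDist x y ≤ m →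
      L x y = ((1 / N * (Real.sqrt (π x * π y) / (π x + π y)) : ℝ) : ℂ) *
        Complex.exp (Complex.I * ((φ x - φ y : ℝ) : ℂ)))
    (hLdiag : ∀ x, L x x = ((1 / N *
      ∑ x' ∈ Finset.univ.filter
        (fun x' => 1 ≤ hammingDist x x' ∧ hammingDist x x' ≤ m),
          π x / (π x + π x') : ℝ) : ℂ))
    (hLfar : ∀ x y, m < hammingDist x y → L x y = 0) :
    L.IsHermitian ∧ L *ᵥ ψ = ψ :=
  stmt_1_general n m hm1 hmn π hπpos φ ψ hψ N hN L hLoff hLdiag hLfar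
end

section
/- For every n ≥ 1 and every pair of distinct vertices x, y ∈ {0,1}^n of the n-dimensional Boolean hypercube, there exist n simple paths from x to y in the hypercube that are pairwise internally disjoint (no two of them share any vertex except the endpoints x and y), and each of these paths has length at most n + 1. -/
/-!
Let `S` be the set of coordinates in which `x` and `y` differ, so that `y` is `x` with the bits
of `S` flipped. Fix a cyclic order of `S`. For `i ∈ S` the path flips the bits of `S` one at a
time in cyclic order starting at `i` (length `#S`); for `i ∉ S` it flips `i`, then the bits of `S`,
then `i` back (length `#S + 2 ≤ n + 1`). An interior vertex of a path of the first kind is `x`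
flipped on a proper nonempty cyclic interval of `S`, which determines its starting point; one of
the second kind is `x` flipped on `A ∪ {i}` with `A ⊆ S`, which determines `i`. The two kinds
cannot meet since only the second flips a bit outside `S`.
-/

/-- The `n`-dimensional Boolean hypercube graph: vertices are bit strings of
length `n`, adjacent iff they differ in exactly one bit. -/
def cubeGraph (n : ℕ) : SimpleGraph (Fin n → Bool) where
  Adj x y := hammingDist x y = 1
  symm := by
    constructor
    intro x y h
    rwa [hammingDist_comm]
  loopless := by
    constructor
    intro x h
    simp [hammingDist_self] at h

open SimpleGraph Finset

section FlipBits

variable {ι : Type*} [DecidableEq ι]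

def flipBits (x : ι → Bool) (A : Finset ι) : ι → Bool := fun j => xor (x j) (decide (j ∈ A))

@[simp]
lemma flipBits_empty (x : ι → Bool) : flipBits x ∅ = x := by
  funext j
  simp [flipBits]

lemma flipBits_injective (x : ι → Bool) : Function.Injective (flipBits x) := by
  intro A B h
  ext j
  simpa [flipBits] using congrFun h j

lemma flipBits_flipBits_of_disjoint (x : ι → Bool) {A B : Finset ι} (h : Disjoint A B) :
    flipBits (flipBits x A) B = flipBits x (A ∪ B) := by
  funext j
  by_cases hA : j ∈ A
  · simp [flipBits, hA, disjoint_left.mp h hA]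
  · simp [flipBits, hA]

lemma hammingDist_flipBits [Fintype ι] (x : ι → Bool) (A : Finset ι) :
    hammingDist x (flipBits x A) = #A := by
  rw [hammingDist]
  congr 1
  ext j
  rw [mem_filter]
  by_cases hj : j ∈ A <;> simp [flipBits, hj]

def flipAlong (x : ι → Bool) (l : List ι) : ι → Bool := l.foldl (fun v i => flipBits v {i}) x

lemma flipAlong_eq_flipBits (x : ι → Bool) {l : List ι} (hl : l.Nodup) :
    flipAlong x l = flipBits x l.toFinset := by
  induction l generalizing x with
  | nil => simp [flipAlong]
  | cons i l ih =>
    rw [List.nodup_cons] at hl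
    rw [flipAlong, List.foldl_cons, ← flipAlong, ih _ hl.2, flipBits_flipBits_of_disjoint,
      List.toFinset_cons, insert_eq]
    simpa using hl.1

end FlipBits

section FlipWalk

variable {n : ℕ}

lemma cubeGraph_adj_flipBits_singleton (x : Fin n → Bool) (i : Fin n) :
    (cubeGraph n).Adj x (flipBits x {i}) := by
  show hammingDist _ _ = 1
  rw [hammingDist_flipBits, card_singleton]

def flipWalk (x : Fin n → Bool) : (l : List (Fin n)) → (cubeGraph n).Walk x (flipAlong x l)
  | [] => Walk.nil
  | i :: l => Walk.cons (cubeGraph_adj_flipBits_singleton x i) (flipWalk (flipBits x {i}) l)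

lemma length_flipWalk (x : Fin n → Bool) (l : List (Fin n)) :
    (flipWalk x l).length = l.length := by
  induction l generalizing x with
  | nil => rfl
  | cons i l ih => exact congrArg (· + 1) (ih _)

lemma support_flipWalk (x : Fin n → Bool) (l : List (Fin n)) :
    (flipWalk x l).support = l.inits.map (flipAlong x) := by
  induction l generalizing x with
  | nil => rfl
  | cons i l ih =>
    show x :: (flipWalk (flipBits x {i}) l).support = _
    rw [ih]
    simp [flipAlong, Function.comp_def]

lemma mem_support_flipWalk (x : Fin n → Bool) {l : List (Fin n)} (hl : l.Nodup)
    (v : Fin n → Bool) :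
    v ∈ (flipWalk x l).support ↔ ∃ t ≤ l.length, flipBits x (l.take t).toFinset = v := by
  simp only [support_flipWalk, List.mem_map, List.mem_inits]
  constructor
  · rintro ⟨p, hp, rfl⟩
    refine ⟨p.length, hp.length_le, ?_⟩
    rw [← List.prefix_iff_eq_take.mp hp, flipAlong_eq_flipBits x (hl.sublist hp.sublist)]
  · rintro ⟨t, -, rfl⟩
    exact ⟨l.take t, List.take_prefix t l,
      flipAlong_eq_flipBits x (hl.sublist (List.take_prefix t l).sublist)⟩

lemma isPath_flipWalk (x : Fin n → Bool) {l : List (Fin n)} (hl : l.Nodup) :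
    (flipWalk x l).IsPath := by
  induction l generalizing x with
  | nil => exact Walk.IsPath.nil
  | cons i l ih =>
    rw [List.nodup_cons] at hl
    refine (Walk.cons_isPath_iff _ _).mpr ⟨ih _ hl.2, ?_⟩
    intro hx
    obtain ⟨t, -, ht⟩ := (mem_support_flipWalk _ hl.2 x).mp hx
    have hi : i ∉ (l.take t).toFinset := by
      simpa using fun h => hl.1 (List.mem_of_mem_take h)
    rw [flipBits_flipBits_of_disjoint _ (disjoint_singleton_left.mpr hi)] at ht
    simpa using flipBits_injective x (ht.trans (flipBits_empty x).symm)

end FlipWalk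

/-- `{j | (j - k).val < t}` is the cyclic window `{k, …, k + t - 1}`; for `0 < t < d`, its start
`k` is its only element whose predecessor lies outside it. -/
lemma Fin.eq_of_forall_val_sub_lt_iff {d t : ℕ} {k k' : Fin d} (ht : 0 < t) (htd : t < d)
    (h : ∀ j : Fin d, (j - k).val < t ↔ (j - k').val < t) : k = k' := by
  obtain ⟨m, rfl⟩ : ∃ m, d = m + 1 := ⟨d - 1, by omega⟩
  have hk : (k - k').val < t := (h k).mp (by simpa using ht)
  by_contra hne
  have hpred : (k - 1 - k').val < t := by
    rw [sub_right_comm, Fin.coe_sub_one, if_neg (sub_ne_zero.mpr hne)]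
    omega
  have := (h (k - 1)).mpr hpred
  rw [sub_sub_cancel_left, Fin.coe_neg_one] at this
  omega

section CyclicOrder

variable {α : Type*} {d : ℕ} [NeZero d]

lemma mem_take_ofFn_add (e : Fin d → α) (k : Fin d) (t : ℕ) (v : α) :
    v ∈ (List.ofFn fun a => e (k + a)).take t ↔ ∃ j, (j - k).val < t ∧ e j = v := by
  rw [List.mem_take_iff_getElem]
  constructor
  · rintro ⟨a, ha, rfl⟩
    rw [List.length_ofFn, lt_min_iff] at ha
    exact ⟨k + ⟨a, ha.2⟩, by simpa using ha.1, by simp⟩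
  · rintro ⟨j, hj, rfl⟩
    exact ⟨(j - k).val, by simp [hj], by simp⟩

lemma eq_of_toFinset_take_ofFn_add_eq [DecidableEq α] {e : Fin d → α} (he : Function.Injective e)
    {k k' : Fin d} {t : ℕ} (ht : 0 < t) (htd : t < d)
    (h : ((List.ofFn fun a => e (k + a)).take t).toFinset =
      ((List.ofFn fun a => e (k' + a)).take t).toFinset) : k = k' := by
  refine Fin.eq_of_forall_val_sub_lt_iff ht htd fun j => ?_
  have := congrArg (e j ∈ ·) h
  simpa [mem_take_ofFn_add, he.eq_iff] using this

end CyclicOrder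

lemma List.card_toFinset_take {α : Type*} [DecidableEq α] {l : List α} (hl : l.Nodup) {t : ℕ}
    (ht : t ≤ l.length) : (l.take t).toFinset.card = t := by
  rw [List.toFinset_card_of_nodup (hl.sublist (List.take_sublist t l)), List.length_take,
    min_eq_left ht]

section Construction

variable {n : ℕ} (x : Fin n → Bool) (S : Finset (Fin n))

noncomputable def cyclicOrder (k : Fin #S) : List (Fin n) :=
  List.ofFn fun a => (S.equivFin.symm (k + a) : Fin n)

lemma nodup_cyclicOrder (k : Fin #S) : (cyclicOrder S k).Nodup :=
  List.nodup_ofFn.mpr <|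
    Subtype.val_injective.comp (S.equivFin.symm.injective.comp (add_right_injective k))

lemma length_cyclicOrder (k : Fin #S) : (cyclicOrder S k).length = #S :=
  List.length_ofFn

lemma toFinset_cyclicOrder (k : Fin #S) : (cyclicOrder S k).toFinset = S := by
  have := NeZero.of_pos k.pos
  ext v
  simp only [cyclicOrder, List.mem_toFinset, List.mem_ofFn]
  constructor
  · rintro ⟨a, rfl⟩
    exact Subtype.prop _
  · intro hv
    exact ⟨S.equivFin ⟨v, hv⟩ - k, by simp⟩

noncomputable def rotationWalk (k : Fin #S) : (cubeGraph n).Walk x (flipBits x S) :=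
  (flipWalk x (cyclicOrder S k)).copy rfl <| by
    rw [flipAlong_eq_flipBits x (nodup_cyclicOrder S k), toFinset_cyclicOrder]

lemma isPath_rotationWalk (k : Fin #S) : (rotationWalk x S k).IsPath :=
  (Walk.isPath_copy _ _ _).mpr (isPath_flipWalk x (nodup_cyclicOrder S k))

lemma length_rotationWalk (k : Fin #S) : (rotationWalk x S k).length = #S := by
  rw [rotationWalk, Walk.length_copy, length_flipWalk, length_cyclicOrder]

lemma mem_support_rotationWalk {k : Fin #S} {v : Fin n → Bool} :
    v ∈ (rotationWalk x S k).support ↔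
      ∃ t ≤ #S, flipBits x ((cyclicOrder S k).take t).toFinset = v := by
  rw [rotationWalk, Walk.support_copy, mem_support_flipWalk x (nodup_cyclicOrder S k),
    length_cyclicOrder]

lemma exists_subset_of_mem_support_rotationWalk {k : Fin #S} {v : Fin n → Bool}
    (hv : v ∈ (rotationWalk x S k).support) : ∃ A ⊆ S, flipBits x A = v := by
  obtain ⟨t, -, rfl⟩ := (mem_support_rotationWalk x S).mp hv
  refine ⟨_, fun a ha => ?_, rfl⟩
  rw [← toFinset_cyclicOrder S k, List.mem_toFinset]
  exact List.mem_of_mem_take (List.mem_toFinset.mp ha)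

lemma eq_of_mem_support_rotationWalk {k k' : Fin #S} {v : Fin n → Bool}
    (hv : v ∈ (rotationWalk x S k).support) (hv' : v ∈ (rotationWalk x S k').support) :
    v = x ∨ v = flipBits x S ∨ k = k' := by
  obtain ⟨t, ht, rfl⟩ := (mem_support_rotationWalk x S).mp hv
  obtain ⟨t', ht', hv'⟩ := (mem_support_rotationWalk x S).mp hv'
  have hA := flipBits_injective x hv'
  obtain rfl : t = t' := by
    have := congrArg Finset.card hA.symm
    rwa [List.card_toFinset_take (nodup_cyclicOrder S k) (by rwa [length_cyclicOrder]),
      List.card_toFinset_take (nodup_cyclicOrder S k') (by rwa [length_cyclicOrder])] at this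
  rcases Nat.eq_zero_or_pos t with rfl | ht0
  · simp
  rcases ht.eq_or_lt with rfl | htS
  · refine Or.inr (Or.inl ?_)
    rw [List.take_of_length_le (length_cyclicOrder S k).le, toFinset_cyclicOrder]
  · have := NeZero.of_pos k.pos
    have he : Function.Injective fun a => (S.equivFin.symm a : Fin n) :=
      Subtype.val_injective.comp S.equivFin.symm.injective
    exact Or.inr (Or.inr (eq_of_toFinset_take_ofFn_add_eq he ht0 htS hA).symm)

lemma cubeGraph_adj_flipBits_insert {i : Fin n} {A : Finset (Fin n)} (hi : i ∉ A) :
    (cubeGraph n).Adj (flipBits x (insert i A)) (flipBits x A) := by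
  rw [insert_eq, union_comm, ← flipBits_flipBits_of_disjoint x (disjoint_singleton_right.mpr hi)]
  exact (cubeGraph_adj_flipBits_singleton _ i).symm

variable {S} {i : Fin n}

lemma nodup_cons_toList (hi : i ∉ S) : (i :: S.toList).Nodup :=
  List.nodup_cons.mpr ⟨by simpa using hi, S.nodup_toList⟩

noncomputable def detourWalk (hi : i ∉ S) : (cubeGraph n).Walk x (flipBits x S) :=
  (flipWalk x (i :: S.toList)).concat <| by
    rw [flipAlong_eq_flipBits x (nodup_cons_toList hi), List.toFinset_cons, toList_toFinset]
    exact cubeGraph_adj_flipBits_insert x hi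

lemma length_detourWalk (hi : i ∉ S) : (detourWalk x hi).length = #S + 2 := by
  simp [detourWalk, length_flipWalk]

lemma exists_subset_of_mem_support_flipWalk_cons_toList (hi : i ∉ S) {v : Fin n → Bool}
    (hv : v ∈ (flipWalk x (i :: S.toList)).support) :
    v = x ∨ ∃ A ⊆ S, flipBits x (insert i A) = v := by
  obtain ⟨t, -, rfl⟩ := (mem_support_flipWalk x (nodup_cons_toList hi) v).mp hv
  cases t with
  | zero => simp
  | succ t =>
    refine Or.inr ⟨(S.toList.take t).toFinset, fun a ha => ?_, by simp⟩
    simpa using List.mem_of_mem_take (List.mem_toFinset.mp ha)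

lemma isPath_detourWalk (hi : i ∉ S) (hS : S.Nonempty) : (detourWalk x hi).IsPath := by
  refine (isPath_flipWalk x (nodup_cons_toList hi)).concat ?_ _
  intro hy
  rcases exists_subset_of_mem_support_flipWalk_cons_toList x hi hy with hx | ⟨A, -, hA⟩
  · exact hS.ne_empty (flipBits_injective x (hx.trans (flipBits_empty x).symm))
  · exact hi (flipBits_injective x hA ▸ mem_insert_self i A)

lemma exists_subset_of_mem_support_detourWalk (hi : i ∉ S) {v : Fin n → Bool}
    (hv : v ∈ (detourWalk x hi).support) :
    v = x ∨ v = flipBits x S ∨ ∃ A ⊆ S, flipBits x (insert i A) = v := by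
  rw [detourWalk, Walk.support_concat, List.mem_append, List.mem_singleton] at hv
  rcases hv with hv | hv
  · exact (exists_subset_of_mem_support_flipWalk_cons_toList x hi hv).imp_right Or.inr
  · exact Or.inr (Or.inl hv)

lemma eq_of_mem_support_rotationWalk_detourWalk (hi : i ∉ S) {k : Fin #S} {v : Fin n → Bool}
    (hv : v ∈ (rotationWalk x S k).support) (hv' : v ∈ (detourWalk x hi).support) :
    v = x ∨ v = flipBits x S := by
  obtain ⟨B, hB, rfl⟩ := exists_subset_of_mem_support_rotationWalk x S hv
  rcases exists_subset_of_mem_support_detourWalk x hi hv' with h | h | ⟨A, -, hA⟩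
  · exact Or.inl h
  · exact Or.inr h
  · exact absurd (hB (flipBits_injective x hA ▸ mem_insert_self i A)) hi

lemma eq_of_mem_support_detourWalk {j : Fin n} (hi : i ∉ S) (hj : j ∉ S) {v : Fin n → Bool}
    (hv : v ∈ (detourWalk x hi).support) (hv' : v ∈ (detourWalk x hj).support) :
    v = x ∨ v = flipBits x S ∨ i = j := by
  rcases exists_subset_of_mem_support_detourWalk x hi hv with h | h | ⟨A, -, rfl⟩
  · exact Or.inl h
  · exact Or.inr (Or.inl h)
  rcases exists_subset_of_mem_support_detourWalk x hj hv' with h | h | ⟨B, hBS, hB⟩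
  · exact Or.inl h
  · exact Or.inr (Or.inl h)
  have : i ∈ insert j B := flipBits_injective x hB ▸ mem_insert_self i A
  exact Or.inr (Or.inr ((mem_insert.mp this).resolve_right fun h => hi (hBS h)))

variable (S) in
noncomputable def cubePath (i : Fin n) : (cubeGraph n).Walk x (flipBits x S) :=
  if hi : i ∈ S then rotationWalk x S (S.equivFin ⟨i, hi⟩) else detourWalk x hi

lemma isPath_cubePath (hS : S.Nonempty) (i : Fin n) : (cubePath x S i).IsPath := by
  unfold cubePath
  split_ifs with hi
  · exact isPath_rotationWalk x S _
  · exact isPath_detourWalk x hi hS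

lemma length_cubePath_le (i : Fin n) : (cubePath x S i).length ≤ n + 1 := by
  unfold cubePath
  split_ifs with hi
  · have := S.card_le_univ
    simp only [length_rotationWalk, Fintype.card_fin] at this ⊢
    omega
  · have := card_lt_univ_of_notMem hi
    simp only [length_detourWalk, Fintype.card_fin] at this ⊢
    omega

lemma eq_of_mem_support_cubePath {i j : Fin n} (hij : i ≠ j) {v : Fin n → Bool}
    (hv : v ∈ (cubePath x S i).support) (hv' : v ∈ (cubePath x S j).support) :
    v = x ∨ v = flipBits x S := by
  unfold cubePath at hv hv'
  split_ifs at hv hv' with hi hj hj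
  · refine (eq_of_mem_support_rotationWalk x S hv hv').imp_right (Or.resolve_right · ?_)
    simpa using hij
  · exact eq_of_mem_support_rotationWalk_detourWalk x hj hv hv'
  · exact eq_of_mem_support_rotationWalk_detourWalk x hi hv' hv
  · exact (eq_of_mem_support_detourWalk x hi hj hv hv').imp_right (Or.resolve_right · hij)

end Construction

lemma exists_flipBits_eq {ι : Type*} [Fintype ι] [DecidableEq ι] (x y : ι → Bool) :
    ∃ A : Finset ι, flipBits x A = y :=
  ⟨univ.filter fun j => x j ≠ y j, funext fun j => by
    cases hx : x j <;> cases hy : y j <;> simp [flipBits, hx, hy]⟩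

theorem stmt_5_general (n : ℕ) (x y : Fin n → Bool) (hxy : x ≠ y) :
    ∃ p : Fin n → (cubeGraph n).Walk x y,
      (∀ i, (p i).IsPath) ∧
      (∀ i, (p i).length ≤ n + 1) ∧
      (∀ i j, i ≠ j → ∀ v, v ∈ (p i).support → v ∈ (p j).support →
        v = x ∨ v = y) := by
  obtain ⟨S, rfl⟩ := exists_flipBits_eq x y
  have hS : S.Nonempty := nonempty_iff_ne_empty.mpr fun h => hxy (by rw [h, flipBits_empty])
  exact ⟨cubePath x S, isPath_cubePath x hS, length_cubePath_le x,
    fun i j hij v => eq_of_mem_support_cubePath x hij⟩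

/-- Between any two distinct vertices of the `n`-dimensional hypercube
there are `n` pairwise internally disjoint simple paths, each of length at most `n + 1`. -/
theorem stmt_5 (n : ℕ) (hn : 1 ≤ n) (x y : Fin n → Bool) (hxy : x ≠ y) :
    ∃ p : Fin n → (cubeGraph n).Walk x y,
      (∀ i, (p i).IsPath) ∧
      (∀ i, (p i).length ≤ n + 1) ∧
      (∀ i j, i ≠ j → ∀ v, v ∈ (p i).support → v ∈ (p j).support →
        v = x ∨ v = y) :=
  stmt_5_general n x y hxy
end

section
/- Let (z(x))_{x∈{0,1}^n} be i.i.d. Exponential(1) random variables, and call a vertex x bad if z(x) ≤ 1/(64n) and good otherwise. Then with probability at least 1 − 2^{−3n}, there exists a set of canonical paths Γ = {γ_xy}, one simple path γ_xy in the n-dimensional hypercube for each ordered pair of distinct vertices (x,y), such that: (1) every path is simple with no self-loops; (2) every path has length at most n + 3; (3) any bad vertex that lies on a path γ_xy is an endpoint of that path (i.e. equals x or y). -/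
/-!
For `x ≠ y` let `D` be the set of coordinates in which they differ. Every coordinate `i` gives an
`x`–`y` path of length at most `n + 2`: for `i ∈ D` flip the coordinates of `D` in a fixed cyclic
order starting at `i`, for `i ∉ D` flip `i`, then `D`, then `i` again. An internal vertex of the
`i`-th path differs from `x` in a proper cyclic interval of `D` starting at `i`, respectively in
`i` together with a prefix of `D`; hence the `n` paths have pairwise disjoint sets of at most
`n + 1` internal vertices. A path contains a bad internal vertex with probability at most
`(n + 1) / (64 n) ≤ 1 / 32`, so by independence all `n` of them do with probability at most
`32 ^ (-n)`, and a union bound over the `4 ^ n` pairs gives `8 ^ (-n)`.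
-/

open MeasureTheory ProbabilityTheory

namespace List

variable {α : Type*} [DecidableEq α] {l : List α} {j k : ℕ}

theorem toFinset_take_ne_toFinset_take_rotate (hl : l.Nodup) (hj0 : 0 < j) (hj : j < l.length)
    (hk0 : 0 < k) (hk : k < l.length) :
    (l.take k).toFinset ≠ ((l.rotate j).take k).toFinset := by
  -- `l[j]` heads `l.rotate j`, which forces `j < k`; then `l[j - 1]` lies in `l.take k` but is
  -- the last entry of `l.rotate j`.
  intro h
  have hjk : j < k := by
    have hmem : l[j] ∈ ((l.rotate j).take k).toFinset := by
      rw [mem_toFinset, mem_take_iff_getElem]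
      exact ⟨0, by rw [length_rotate]; omega, by simp [getElem_rotate, Nat.mod_eq_of_lt hj]⟩
    rw [← h, mem_toFinset, mem_take_iff_getElem] at hmem
    obtain ⟨m, hm, hml⟩ := hmem
    rw [hl.getElem_inj_iff] at hml
    omega
  have hmem : l[j - 1] ∈ (l.take k).toFinset := by
    rw [mem_toFinset, mem_take_iff_getElem]
    exact ⟨j - 1, by omega, rfl⟩
  rw [h, mem_toFinset, mem_take_iff_getElem] at hmem
  obtain ⟨m, hm, hml⟩ := hmem
  rw [getElem_rotate, hl.getElem_inj_iff] at hml
  simp only [length_rotate] at hm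
  rcases lt_or_ge (m + j) l.length with hlt | hge
  · rw [Nat.mod_eq_of_lt hlt] at hml
    omega
  · rw [Nat.mod_eq_sub_mod hge, Nat.mod_eq_of_lt (by omega)] at hml
    omega

theorem eq_of_toFinset_take_rotate_eq (hl : l.Nodup) {a b : ℕ} (ha : a < l.length)
    (hb : b < l.length) (hk0 : 0 < k) (hk : k < l.length)
    (h : ((l.rotate a).take k).toFinset = ((l.rotate b).take k).toFinset) : a = b := by
  wlog hab : a < b generalizing a b
  · obtain hba | rfl := (not_lt.mp hab).lt_or_eq
    · exact (this hb ha h.symm hba).symm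
    · rfl
  refine absurd ?_ (toFinset_take_ne_toFinset_take_rotate (l := l.rotate a) (j := b - a)
    (nodup_rotate.mpr hl) (by omega) (by rw [length_rotate]; omega) hk0 (by rwa [length_rotate]))
  rwa [rotate_rotate, Nat.add_sub_cancel' hab.le]

end List

namespace SimpleGraph.Walk

variable {V : Type*} [DecidableEq V] {G : SimpleGraph V} {u v : V}

def internalVertices (p : G.Walk u v) : Finset V := p.support.toFinset \ {u, v}

theorem mem_internalVertices {p : G.Walk u v} {w : V} :
    w ∈ p.internalVertices ↔ w ∈ p.support ∧ w ≠ u ∧ w ≠ v := by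
  simp [internalVertices, not_or]

theorem card_internalVertices_add_one_le (p : G.Walk u v) (huv : u ≠ v) :
    p.internalVertices.card + 1 ≤ p.length := by
  have hsub : {u, v} ⊆ p.support.toFinset := by simp [Finset.insert_subset_iff]
  have hpair := Finset.card_le_card hsub
  have hcard := p.support.toFinset_card_le
  rw [Finset.card_pair huv] at hpair
  rw [length_support] at hcard
  rw [internalVertices, Finset.card_sdiff_of_subset hsub, Finset.card_pair huv]
  omega

end SimpleGraph.Walk

namespace ProbabilityTheory

variable {Ω : Type*} [MeasurableSpace Ω] {μ : Measure Ω}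

theorem iIndepFun.measure_forall_exists_mem_le {ι κ β : Type*} [MeasurableSpace β] [Fintype κ]
    {f : ι → Ω → β} (hf : iIndepFun f μ) {T : κ → Finset ι}
    (hT : Pairwise fun k k' => Disjoint (T k) (T k'))
    {A : ι → Set β} (hA : ∀ i, MeasurableSet (A i)) :
    μ {ω | ∀ k, ∃ i ∈ T k, f i ω ∈ A i} ≤ ∏ k, ∑ i ∈ T k, μ (f i ⁻¹' A i) := by
  classical
  have hcover : {ω | ∀ k, ∃ i ∈ T k, f i ω ∈ A i} ⊆
      ⋃ σ ∈ Fintype.piFinset T, ⋂ k, f (σ k) ⁻¹' A (σ k) := by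
    intro ω hω
    choose σ hσT hσA using hω
    exact Set.mem_biUnion (Fintype.mem_piFinset.mpr hσT) (Set.mem_iInter.mpr hσA)
  have hchoice : ∀ σ ∈ Fintype.piFinset T,
      μ (⋂ k, f (σ k) ⁻¹' A (σ k)) = ∏ k, μ (f (σ k) ⁻¹' A (σ k)) := by
    intro σ hσ
    have hσinj : σ.Injective := fun k k' hkk' => by
      by_contra hne
      exact Finset.disjoint_left.mp (hT hne) (Fintype.mem_piFinset.mp hσ k)
        (hkk' ▸ Fintype.mem_piFinset.mp hσ k')
    exact (hf.precomp hσinj).meas_iInter fun k => ⟨A (σ k), hA (σ k), rfl⟩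
  calc μ {ω | ∀ k, ∃ i ∈ T k, f i ω ∈ A i}
      ≤ ∑ σ ∈ Fintype.piFinset T, μ (⋂ k, f (σ k) ⁻¹' A (σ k)) :=
        (measure_mono hcover).trans (measure_biUnion_finset_le _ _)
    _ = ∏ k, ∑ i ∈ T k, μ (f i ⁻¹' A i) := by
        rw [Finset.sum_congr rfl hchoice, Finset.prod_univ_sum]

theorem measure_preimage_Iic_le_of_map_eq_expMeasure {X : Ω → ℝ} (hX : Measurable X) {r : ℝ}
    (hr : 0 < r) (hlaw : μ.map X = expMeasure r) (c : ℝ) :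
    μ (X ⁻¹' Set.Iic c) ≤ ENNReal.ofReal (r * c) := by
  have := isProbabilityMeasure_expMeasure hr
  rw [← Measure.map_apply hX measurableSet_Iic, hlaw, ← ofReal_cdf, cdf_expMeasure_eq hr]
  split_ifs with hc
  · exact ENNReal.ofReal_le_ofReal (by linarith [Real.add_one_le_exp (-(r * c))])
  · simp

end ProbabilityTheory

namespace cubeGraph

variable {n : ℕ}

def flipSet (x : Fin n → Bool) (S : Finset (Fin n)) : Fin n → Bool :=
  fun j => if j ∈ S then !x j else x j

def flipBit (x : Fin n → Bool) (i : Fin n) : Fin n → Bool := flipSet x {i}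

def diffCoords (x y : Fin n → Bool) : Finset (Fin n) := {j | x j ≠ y j}

theorem flipSet_empty (x : Fin n → Bool) : flipSet x ∅ = x := by
  funext j
  simp [flipSet]

theorem flipSet_flipSet (x : Fin n → Bool) (S T : Finset (Fin n)) :
    flipSet (flipSet x S) T = flipSet x (symmDiff S T) := by
  funext j
  by_cases hS : j ∈ S <;> by_cases hT : j ∈ T <;> simp [flipSet, Finset.mem_symmDiff, hS, hT]

theorem flipSet_injective (x : Fin n → Bool) : Function.Injective (flipSet x) := by
  intro S T h
  ext j
  have hj := congrFun h j
  by_cases hS : j ∈ S <;> by_cases hT : j ∈ T <;> simp_all [flipSet]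

theorem flipSet_diffCoords (x y : Fin n → Bool) : flipSet x (diffCoords x y) = y := by
  funext j
  cases hx : x j <;> cases hy : y j <;> simp [flipSet, diffCoords, hx, hy]

theorem hammingDist_flipSet (x : Fin n → Bool) (S : Finset (Fin n)) :
    hammingDist x (flipSet x S) = S.card := by
  unfold hammingDist
  congr 1
  ext j
  by_cases h : j ∈ S <;> simp [flipSet, h]

theorem adj_flipBit (x : Fin n → Bool) (i : Fin n) : (cubeGraph n).Adj x (flipBit x i) :=
  (hammingDist_flipSet x {i}).trans (Finset.card_singleton i)

theorem foldl_flipBit {l : List (Fin n)} (hl : l.Nodup) (x : Fin n → Bool) :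
    l.foldl flipBit x = flipSet x l.toFinset := by
  induction l generalizing x with
  | nil => exact (flipSet_empty x).symm
  | cons i l ih =>
    obtain ⟨hi, hl⟩ := List.nodup_cons.mp hl
    have hdisj : Disjoint {i} l.toFinset := by simpa using hi
    rw [List.foldl_cons, ih hl, flipBit, flipSet_flipSet, hdisj.symmDiff_eq_sup,
      List.toFinset_cons]
    rfl

def walkAlong (x : Fin n → Bool) : (l : List (Fin n)) → (cubeGraph n).Walk x (l.foldl flipBit x)
  | [] => .nil
  | i :: l => .cons (adj_flipBit x i) (walkAlong (flipBit x i) l)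

theorem length_walkAlong (x : Fin n → Bool) (l : List (Fin n)) :
    (walkAlong x l).length = l.length := by
  induction l generalizing x with
  | nil => rfl
  | cons i l ih => simp [walkAlong, ih]

theorem support_walkAlong (x : Fin n → Bool) (l : List (Fin n)) :
    (walkAlong x l).support = l.inits.map (·.foldl flipBit x) := by
  induction l generalizing x with
  | nil => rfl
  | cons i l ih => simp [walkAlong, ih, Function.comp_def]

theorem mem_support_walkAlong {l : List (Fin n)} (hl : l.Nodup) {x v : Fin n → Bool} :
    v ∈ (walkAlong x l).support ↔ ∃ p, p <+: l ∧ v = flipSet x p.toFinset := by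
  simp only [support_walkAlong, List.mem_map, List.mem_inits]
  constructor <;> rintro ⟨p, hp, rfl⟩ <;> exact ⟨p, hp, foldl_flipBit (hl.sublist hp.sublist) x⟩

theorem isPath_walkAlong {l : List (Fin n)} (hl : l.Nodup) (x : Fin n → Bool) :
    (walkAlong x l).IsPath := by
  induction l generalizing x with
  | nil => exact .nil
  | cons i l ih =>
    obtain ⟨hi, hl⟩ := List.nodup_cons.mp hl
    refine (ih hl _).cons ?_
    rw [mem_support_walkAlong hl]
    rintro ⟨p, hp, hx⟩
    rw [flipBit, flipSet_flipSet] at hx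
    have hsingleton : {i} = p.toFinset :=
      symmDiff_eq_bot.mp (flipSet_injective x (hx.symm.trans (flipSet_empty x).symm))
    exact hi (hp.subset (List.mem_toFinset.mp (hsingleton ▸ Finset.mem_singleton_self i)))

variable (x y : Fin n → Bool)

theorem toFinset_rotate_toList_diffCoords (a : ℕ) :
    ((diffCoords x y).toList.rotate a).toFinset = diffCoords x y := by
  rw [List.toFinset_eq_of_perm _ _ (List.rotate_perm _ _), Finset.toList_toFinset]

theorem foldl_flipBit_rotate_toList (a : ℕ) :
    ((diffCoords x y).toList.rotate a).foldl flipBit x = y := by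
  rw [foldl_flipBit (List.nodup_rotate.mpr (Finset.nodup_toList _)),
    toFinset_rotate_toList_diffCoords, flipSet_diffCoords]

theorem nodup_cons_toList_diffCoords {i : Fin n} (hi : i ∉ diffCoords x y) :
    (i :: (diffCoords x y).toList).Nodup :=
  List.nodup_cons.mpr ⟨by simpa using hi, Finset.nodup_toList _⟩

theorem adj_foldl_flipBit_cons_toList {i : Fin n} (hi : i ∉ diffCoords x y) :
    (cubeGraph n).Adj ((i :: (diffCoords x y).toList).foldl flipBit x) y := by
  have hdisj : Disjoint {i} (diffCoords x y) := Finset.disjoint_singleton_left.mpr hi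
  rw [foldl_flipBit (nodup_cons_toList_diffCoords x y hi), List.toFinset_cons,
    Finset.toList_toFinset]
  convert adj_flipBit (flipSet x (insert i (diffCoords x y))) i
  rw [flipBit, flipSet_flipSet, Finset.insert_eq, ← Finset.sup_eq_union, ← hdisj.symmDiff_eq_sup,
    symmDiff_comm, symmDiff_symmDiff_cancel_left, flipSet_diffCoords]

noncomputable def canonicalPath (i : Fin n) : (cubeGraph n).Walk x y :=
  if hi : i ∈ diffCoords x y then
    (walkAlong x ((diffCoords x y).toList.rotate ((diffCoords x y).toList.idxOf i))).copy rfl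
      (foldl_flipBit_rotate_toList x y _)
  else
    (walkAlong x (i :: (diffCoords x y).toList)).concat (adj_foldl_flipBit_cons_toList x y hi)

theorem card_diffCoords_le : (diffCoords x y).card ≤ n :=
  (Finset.card_le_univ _).trans_eq (Fintype.card_fin n)

theorem length_canonicalPath_le (i : Fin n) : (canonicalPath x y i).length ≤ n + 2 := by
  have := card_diffCoords_le x y
  unfold canonicalPath
  split_ifs
  · simp only [SimpleGraph.Walk.length_copy, length_walkAlong, List.length_rotate,
      Finset.length_toList]
    omega
  · rw [SimpleGraph.Walk.length_concat, length_walkAlong, List.length_cons, Finset.length_toList]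
    omega

variable {x y}

theorem isPath_canonicalPath (hxy : x ≠ y) (i : Fin n) : (canonicalPath x y i).IsPath := by
  unfold canonicalPath
  split_ifs with hi
  · exact (SimpleGraph.Walk.isPath_copy _ _ _).mpr
      (isPath_walkAlong (List.nodup_rotate.mpr (Finset.nodup_toList _)) x)
  · have hnodup := nodup_cons_toList_diffCoords x y hi
    refine (isPath_walkAlong hnodup x).concat ?_ _
    rw [mem_support_walkAlong hnodup]
    rintro ⟨p, hp, hy⟩
    rcases List.prefix_cons_iff.mp hp with rfl | ⟨t, rfl, -⟩
    · exact hxy (by simpa [flipSet_empty] using hy.symm)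
    · rw [← flipSet_diffCoords x y] at hy
      exact hi (by simp [flipSet_injective x hy])

theorem exists_take_of_mem_internalVertices_of_mem {i : Fin n} (hi : i ∈ diffCoords x y)
    {v : Fin n → Bool} (hv : v ∈ (canonicalPath x y i).internalVertices) :
    ∃ k, 0 < k ∧ k < (diffCoords x y).card ∧ v = flipSet x
      (((diffCoords x y).toList.rotate ((diffCoords x y).toList.idxOf i)).take k).toFinset := by
  set R := (diffCoords x y).toList.rotate ((diffCoords x y).toList.idxOf i)
  have hR : R.Nodup := List.nodup_rotate.mpr (Finset.nodup_toList _)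
  obtain ⟨hsupp, hvx, hvy⟩ := SimpleGraph.Walk.mem_internalVertices.mp hv
  rw [canonicalPath, dif_pos hi, SimpleGraph.Walk.support_copy, mem_support_walkAlong hR] at hsupp
  obtain ⟨p, hp, rfl⟩ := hsupp
  have hlen : p.length ≤ (diffCoords x y).card := by
    simpa [R] using hp.length_le
  refine ⟨p.length, ?_, ?_, by rw [← List.prefix_iff_eq_take.mp hp]⟩
  · refine List.length_pos_iff.mpr fun hp0 => hvx ?_
    simp [hp0, flipSet_empty]
  · refine lt_of_le_of_ne hlen fun hpR => hvy ?_
    rw [hp.eq_of_length (by simpa [R] using hpR), toFinset_rotate_toList_diffCoords x y,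
      flipSet_diffCoords]

theorem exists_of_mem_internalVertices_of_notMem {i : Fin n} (hi : i ∉ diffCoords x y)
    {v : Fin n → Bool} (hv : v ∈ (canonicalPath x y i).internalVertices) :
    ∃ S, i ∈ S ∧ S ⊆ insert i (diffCoords x y) ∧ v = flipSet x S := by
  have hnodup := nodup_cons_toList_diffCoords x y hi
  obtain ⟨hsupp, hvx, hvy⟩ := SimpleGraph.Walk.mem_internalVertices.mp hv
  rw [canonicalPath, dif_neg hi, SimpleGraph.Walk.support_concat,
    List.mem_append, List.mem_singleton, or_iff_left hvy, mem_support_walkAlong hnodup] at hsupp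
  obtain ⟨p, hp, rfl⟩ := hsupp
  rcases List.prefix_cons_iff.mp hp with rfl | ⟨t, rfl, ht⟩
  · exact absurd (flipSet_empty x) hvx
  · refine ⟨_, by simp, fun j hj => ?_, rfl⟩
    simp only [List.toFinset_cons, Finset.mem_insert, List.mem_toFinset] at hj ⊢
    exact hj.imp_right fun hjt => Finset.mem_toList.mp (ht.subset hjt)

theorem notMem_internalVertices_of_mem_of_notMem {i i' : Fin n} (hi : i ∈ diffCoords x y)
    (hi' : i' ∉ diffCoords x y) {v : Fin n → Bool}
    (hv : v ∈ (canonicalPath x y i).internalVertices) :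
    v ∉ (canonicalPath x y i').internalVertices := by
  intro hv'
  obtain ⟨k, -, -, rfl⟩ := exists_take_of_mem_internalVertices_of_mem hi hv
  obtain ⟨S', hiS', -, hS'⟩ := exists_of_mem_internalVertices_of_notMem hi' hv'
  rw [← flipSet_injective x hS', List.mem_toFinset] at hiS'
  exact hi' (by simpa using List.mem_of_mem_take hiS')

theorem disjoint_internalVertices_canonicalPath {i i' : Fin n} (hii' : i ≠ i') :
    Disjoint (canonicalPath x y i).internalVertices (canonicalPath x y i').internalVertices := by
  rw [Finset.disjoint_left]
  intro v hv hv'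
  by_cases hi : i ∈ diffCoords x y <;> by_cases hi' : i' ∈ diffCoords x y
  · obtain ⟨k, hk0, hk, rfl⟩ := exists_take_of_mem_internalVertices_of_mem hi hv
    obtain ⟨k', -, hk', hkk'⟩ := exists_take_of_mem_internalVertices_of_mem hi' hv'
    have hS := flipSet_injective x hkk'
    have hcard := congrArg Finset.card hS
    simp only [List.toFinset_card_of_nodup ((List.nodup_rotate.mpr (Finset.nodup_toList _)).sublist
      (List.take_sublist _ _)), List.length_take, List.length_rotate, Finset.length_toList] at hcard
    obtain rfl : k = k' := by omega
    refine hii' ((List.idxOf_inj (Finset.mem_toList.mpr hi)).mp ?_)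
    exact List.eq_of_toFinset_take_rotate_eq (Finset.nodup_toList _)
      (List.idxOf_lt_length_of_mem (Finset.mem_toList.mpr hi))
      (List.idxOf_lt_length_of_mem (Finset.mem_toList.mpr hi')) hk0 (by simpa using hk) hS
  · exact notMem_internalVertices_of_mem_of_notMem hi hi' hv hv'
  · exact notMem_internalVertices_of_mem_of_notMem hi' hi hv' hv
  · obtain ⟨S, hiS, -, rfl⟩ := exists_of_mem_internalVertices_of_notMem hi hv
    obtain ⟨S', -, hS', hSS'⟩ := exists_of_mem_internalVertices_of_notMem hi' hv'
    rw [flipSet_injective x hSS'] at hiS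
    exact (Finset.mem_insert.mp (hS' hiS)).elim hii' (fun h => hi h)

variable (x y) in
theorem card_internalVertices_canonicalPath_le (hxy : x ≠ y) (i : Fin n) :
    (canonicalPath x y i).internalVertices.card ≤ n + 1 := by
  have := (canonicalPath x y i).card_internalVertices_add_one_le hxy
  have := length_canonicalPath_le x y i
  omega

def CanonicalPathsBlocked (bad : (Fin n → Bool) → Prop) (x y : Fin n → Bool) : Prop :=
  ∀ i, ∃ v ∈ (canonicalPath x y i).internalVertices, bad v

theorem exists_paths_avoiding (bad : (Fin n → Bool) → Prop)
    (h : ∀ x y, x ≠ y → ¬ CanonicalPathsBlocked bad x y) :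
    ∃ γ : ∀ x y : Fin n → Bool, (cubeGraph n).Walk x y, ∀ x y, x ≠ y →
      (γ x y).IsPath ∧ (γ x y).length ≤ n + 2 ∧
        ∀ v ∈ (γ x y).support, bad v → v = x ∨ v = y := by
  have hpair : ∀ x y : Fin n → Bool, ∃ w : (cubeGraph n).Walk x y, x ≠ y →
      w.IsPath ∧ w.length ≤ n + 2 ∧ ∀ v ∈ w.support, bad v → v = x ∨ v = y := by
    intro x y
    by_cases hxy : x = y
    · subst hxy
      exact ⟨.nil, fun h => absurd rfl h⟩
    obtain ⟨i, hi⟩ : ∃ i, ∀ v ∈ (canonicalPath x y i).internalVertices, ¬ bad v := by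
      simpa [CanonicalPathsBlocked] using h x y hxy
    refine ⟨canonicalPath x y i, fun _ => ⟨isPath_canonicalPath hxy i,
      length_canonicalPath_le x y i, fun v hv hbad => ?_⟩⟩
    by_contra! hne
    exact hi v (SimpleGraph.Walk.mem_internalVertices.mpr ⟨hv, hne⟩) hbad
  choose γ hγ using hpair
  exact ⟨γ, hγ⟩

section Probability

variable {Ω : Type*} [MeasurableSpace Ω] {μ : Measure Ω} {z : (Fin n → Bool) → Ω → ℝ}

theorem measure_canonicalPathsBlocked_le (hmeas : ∀ v, Measurable (z v))
    (hindep : iIndepFun z μ) (hlaw : ∀ v, μ.map (z v) = expMeasure 1) (hxy : x ≠ y) (c : ℝ) :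
    μ {ω | CanonicalPathsBlocked (fun v => z v ω ≤ c) x y} ≤
      ENNReal.ofReal ((n + 1) * c) ^ n := by
  refine (hindep.measure_forall_exists_mem_le (fun _ _ => disjoint_internalVertices_canonicalPath)
    fun _ => measurableSet_Iic).trans ?_
  rw [← Fin.prod_const]
  refine Finset.prod_le_prod' fun i _ => ?_
  calc ∑ v ∈ (canonicalPath x y i).internalVertices, μ (z v ⁻¹' Set.Iic c)
      ≤ ∑ v ∈ (canonicalPath x y i).internalVertices, ENNReal.ofReal c :=
        Finset.sum_le_sum fun v _ => by
          simpa using measure_preimage_Iic_le_of_map_eq_expMeasure (hmeas v) one_pos (hlaw v) c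
    _ ≤ (n + 1 : ℕ) * ENNReal.ofReal c := by
        rw [Finset.sum_const, nsmul_eq_mul]
        gcongr
        exact card_internalVertices_canonicalPath_le x y hxy i
    _ = ENNReal.ofReal ((n + 1) * c) := by
        rw [ENNReal.ofReal_mul (by positivity), ← Nat.cast_add_one, ENNReal.ofReal_natCast]

theorem measure_exists_canonicalPathsBlocked_le (hmeas : ∀ v, Measurable (z v))
    (hindep : iIndepFun z μ) (hlaw : ∀ v, μ.map (z v) = expMeasure 1) (c : ℝ) :
    μ {ω | ∃ x y : Fin n → Bool, x ≠ y ∧ CanonicalPathsBlocked (fun v => z v ω ≤ c) x y} ≤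
      4 ^ n * ENNReal.ofReal ((n + 1) * c) ^ n := by
  have hpair : ∀ x y : Fin n → Bool,
      μ {ω | x ≠ y ∧ CanonicalPathsBlocked (fun v => z v ω ≤ c) x y} ≤
        ENNReal.ofReal ((n + 1) * c) ^ n := by
    intro x y
    by_cases hxy : x = y
    · simp [hxy]
    · simpa [hxy] using measure_canonicalPathsBlocked_le hmeas hindep hlaw hxy c
  simp only [Set.ofPred_exists]
  calc _ ≤ ∑ x : Fin n → Bool, ∑ y : Fin n → Bool,
          μ {ω | x ≠ y ∧ CanonicalPathsBlocked (fun v => z v ω ≤ c) x y} :=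
        (measure_iUnion_fintype_le _ _).trans
          (Finset.sum_le_sum fun x _ => measure_iUnion_fintype_le _ _)
    _ ≤ ∑ x : Fin n → Bool, ∑ y : Fin n → Bool, ENNReal.ofReal ((n + 1) * c) ^ n :=
        Finset.sum_le_sum fun x _ => Finset.sum_le_sum fun y _ => hpair x y
    _ = 4 ^ n * ENNReal.ofReal ((n + 1) * c) ^ n := by
        simp only [Finset.sum_const, Finset.card_univ, Fintype.card_fun, Fintype.card_bool,
          Fintype.card_fin, nsmul_eq_mul]
        push_cast
        rw [← mul_assoc, ← mul_pow]
        norm_num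

end Probability

end cubeGraph

theorem four_pow_mul_ofReal_pow_le (n : ℕ) :
    4 ^ n * ENNReal.ofReal ((n + 1) * (1 / (64 * n))) ^ n ≤ ENNReal.ofReal ((2 ^ (3 * n))⁻¹) := by
  have hc : (n + 1) * (1 / (64 * n) : ℝ) ≤ 1 / 32 := by
    rcases n.eq_zero_or_pos with rfl | hn
    · norm_num -- `1 / (64 * 0) = 0`
    · rw [mul_one_div, div_le_div_iff₀ (by positivity) (by norm_num)]
      have : (1 : ℝ) ≤ n := by exact_mod_cast hn
      linarith
  calc 4 ^ n * ENNReal.ofReal ((n + 1) * (1 / (64 * n))) ^ n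
      ≤ ENNReal.ofReal 4 ^ n * ENNReal.ofReal (1 / 32) ^ n := by
        rw [ENNReal.ofReal_ofNat]
        gcongr
    _ = ENNReal.ofReal ((2 ^ (3 * n))⁻¹) := by
        rw [← mul_pow, ← ENNReal.ofReal_mul (by norm_num), ← ENNReal.ofReal_pow (by norm_num),
          pow_mul, ← inv_pow]
        norm_num

open cubeGraph in
theorem stmt_10_general (n : ℕ)
    (Ω : Type) [MeasurableSpace Ω] (μ : Measure Ω) [IsProbabilityMeasure μ]
    (z : (Fin n → Bool) → Ω → ℝ) (hmeas : ∀ x, Measurable (z x))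
    (hindep : iIndepFun z μ)
    (hlaw : ∀ x, μ.map (z x) = expMeasure 1) :
    1 - ENNReal.ofReal (((2 : ℝ) ^ (3 * n))⁻¹) ≤
      μ {ω | ∃ γ : ∀ x y : Fin n → Bool, (cubeGraph n).Walk x y,
        ∀ x y : Fin n → Bool, x ≠ y →
          (γ x y).IsPath ∧
          (γ x y).length ≤ n + 3 ∧
          (∀ v ∈ (γ x y).support, z v ω ≤ 1 / (64 * (n : ℝ)) → v = x ∨ v = y)} := by
  set bad := {ω | ∃ x y : Fin n → Bool, x ≠ y ∧
    CanonicalPathsBlocked (fun v => z v ω ≤ 1 / (64 * (n : ℝ))) x y}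
  have hbad : μ bad ≤ ENNReal.ofReal (((2 : ℝ) ^ (3 * n))⁻¹) :=
    (measure_exists_canonicalPathsBlocked_le hmeas hindep hlaw _).trans
      (four_pow_mul_ofReal_pow_le n)
  calc 1 - ENNReal.ofReal (((2 : ℝ) ^ (3 * n))⁻¹) ≤ 1 - μ bad := tsub_le_tsub_left hbad 1
    _ ≤ μ badᶜ := tsub_le_iff_left.mpr (measure_univ (μ := μ) ▸ measure_univ_le_add_compl bad)
    _ ≤ _ := measure_mono fun ω hω => by
        obtain ⟨γ, hγ⟩ := exists_paths_avoiding _ fun x y hxy hblocked => hω ⟨x, y, hxy, hblocked⟩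
        exact ⟨γ, fun x y hxy => (hγ x y hxy).imp_right (And.imp_left (·.trans (by omega)))⟩

/-- Attach i.i.d. `Exponential(1)` weights `z(x)` to the vertices of
`{0,1}^n` and call a vertex bad if `z(x) ≤ 1/(64n)`. With probability at least
`1 - 2^{-3n}` there is a system of canonical paths, one simple path `γ_{xy}` for each
ordered pair of distinct vertices, each of length at most `n + 3`, such that any bad
vertex lying on a path is one of its endpoints. -/
theorem stmt_10 (n : ℕ) (hn : 1 ≤ n)
    (Ω : Type) [MeasurableSpace Ω] (μ : Measure Ω) [IsProbabilityMeasure μ]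
    (z : (Fin n → Bool) → Ω → ℝ) (hmeas : ∀ x, Measurable (z x))
    (hindep : iIndepFun z μ)
    (hlaw : ∀ x, μ.map (z x) = expMeasure 1) :
    1 - ENNReal.ofReal (((2 : ℝ) ^ (3 * n))⁻¹) ≤
      μ {ω | ∃ γ : ∀ x y : Fin n → Bool, (cubeGraph n).Walk x y,
        ∀ x y : Fin n → Bool, x ≠ y →
          (γ x y).IsPath ∧
          (γ x y).length ≤ n + 3 ∧
          (∀ v ∈ (γ x y).support, z v ω ≤ 1 / (64 * (n : ℝ)) → v = x ∨ v = y)} :=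
  stmt_10_general n Ω μ z hmeas hindep hlaw
end

section
/- Fix an origin u ∈ {0,1}^n and define the level of a vertex v as L(v) = d(u,v). For a path P = (v₀, v₁, …, v_ℓ) in the hypercube (consecutive vertices adjacent), call the i-th step P_i an up arrow if L(v_i) = L(v_{i−1}) + 1 and a down arrow if L(v_i) = L(v_{i−1}) − 1, and define the level of a step as L(P_i) = min(L(v_{i−1}), L(v_i)). Let n_{↑,b}(P,i) be the number of up arrows among steps 1,…,i−1 and n_{↓,a}(P,i) the number of down arrows among steps i+1,…,ℓ. Suppose P* is a path of length ℓ* from s* to t' whose (ℓ*−1)-th step is an up arrow from s to t. Then for every path P of length ℓ* from s* to t' and every i ∈ {1,…,ℓ*}: L(P_i) ≤ L(s) + n_{↑,b}(P,i) + n_{↓,a}(P,i). -/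
/-!
Write `L = hammingDist u`. Every step of a walk in the cube changes `L` by exactly one (by parity),
so along a walk `L` telescopes: `L(vₘ) + #down = L(v₀) + #up` and `#up + #down = m`. Hence two walks
with the same endpoints and the same length have the same number `D` of down steps. Along `P*`, the
level can only drop at down steps, so `L(s*) ≤ L(s) + D`. Along `P`, the lower end of step `i` has
level `L(s*) + n_{↑,b}(P,i) - #(down steps among 1, …, i)`, and the down steps of `P` not among
`1, …, i` are exactly the ones counted by `n_{↓,a}(P,i)`.
-/

open Finset

theorem hammingDist_cast_zmodTwo {ι : Type*} [Fintype ι] (x y z : ι → Bool) :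
    (hammingDist x z : ZMod 2) = hammingDist x y + hammingDist y z := by
  simp only [hammingDist, card_filter]
  push_cast
  rw [← sum_add_distrib]
  refine sum_congr rfl fun i _ => ?_
  cases x i <;> cases y i <;> cases z i <;> decide

namespace Finset

theorem card_filter_Ioc_add_one (p : ℕ → Prop) [DecidablePred p] {k m : ℕ} (h : k ≤ m) :
    #{j ∈ Ioc k (m + 1) | p j} = #{j ∈ Ioc k m | p j} + if p (m + 1) then 1 else 0 := by
  simp only [card_filter, sum_Ioc_succ_top h]

theorem card_filter_Ioc_consecutive (p : ℕ → Prop) [DecidablePred p] {k i m : ℕ}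
    (hki : k ≤ i) (him : i ≤ m) :
    #{j ∈ Ioc k i | p j} + #{j ∈ Ioc i m | p j} = #{j ∈ Ioc k m | p j} := by
  simp only [card_filter, sum_Ioc_consecutive _ hki him]

end Finset

namespace SimpleGraph

variable {V : Type*} {G : SimpleGraph V}

def IsLevelFunction (G : SimpleGraph V) (f : V → ℕ) : Prop :=
  ∀ ⦃x y⦄, G.Adj x y → f y = f x + 1 ∨ f x = f y + 1

namespace Walk

variable {f : V → ℕ} {a b : V}

/- Step `j` of a walk goes from `P.getVert (j - 1)` to `P.getVert j`; these count the up and down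
steps among steps `k + 1, …, m`. -/
def numUp (f : V → ℕ) (P : G.Walk a b) (k m : ℕ) : ℕ :=
  #{j ∈ Ioc k m | f (P.getVert j) = f (P.getVert (j - 1)) + 1}

def numDown (f : V → ℕ) (P : G.Walk a b) (k m : ℕ) : ℕ :=
  #{j ∈ Ioc k m | f (P.getVert (j - 1)) = f (P.getVert j) + 1}

theorem numUp_add_one (P : G.Walk a b) {k m : ℕ} (h : k ≤ m) :
    P.numUp f k (m + 1) =
      P.numUp f k m + if f (P.getVert (m + 1)) = f (P.getVert m) + 1 then 1 else 0 := by
  simp only [numUp, card_filter_Ioc_add_one _ h, Nat.add_sub_cancel]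

theorem numDown_add_one (P : G.Walk a b) {k m : ℕ} (h : k ≤ m) :
    P.numDown f k (m + 1) =
      P.numDown f k m + if f (P.getVert m) = f (P.getVert (m + 1)) + 1 then 1 else 0 := by
  simp only [numDown, card_filter_Ioc_add_one _ h, Nat.add_sub_cancel]

theorem numDown_add_numDown (P : G.Walk a b) {k i m : ℕ} (hki : k ≤ i) (him : i ≤ m) :
    P.numDown f k i + P.numDown f i m = P.numDown f k m :=
  card_filter_Ioc_consecutive _ hki him

theorem level_add_numDown (hf : G.IsLevelFunction f) (P : G.Walk a b) {k m : ℕ} (hkm : k ≤ m)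
    (hm : m ≤ P.length) :
    f (P.getVert m) + P.numDown f k m = f (P.getVert k) + P.numUp f k m := by
  induction m, hkm using Nat.le_induction with
  | base => simp [numUp, numDown]
  | succ m hkm ih =>
    rw [P.numUp_add_one hkm, P.numDown_add_one hkm]
    have := ih (by omega)
    rcases hf (P.adj_getVert_succ (by omega : m < P.length)) with h | h <;> split_ifs <;> omega

theorem numUp_add_numDown (hf : G.IsLevelFunction f) (P : G.Walk a b) {k m : ℕ} (hkm : k ≤ m)
    (hm : m ≤ P.length) :
    P.numUp f k m + P.numDown f k m = m - k := by
  induction m, hkm using Nat.le_induction with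
  | base => simp [numUp, numDown]
  | succ m hkm ih =>
    rw [P.numUp_add_one hkm, P.numDown_add_one hkm]
    have := ih (by omega)
    rcases hf (P.adj_getVert_succ (by omega : m < P.length)) with h | h <;> split_ifs <;> omega

theorem numDown_eq_of_length_eq (hf : G.IsLevelFunction f) (P Q : G.Walk a b)
    (h : P.length = Q.length) :
    P.numDown f 0 P.length = Q.numDown f 0 Q.length := by
  have hP := P.level_add_numDown hf (Nat.zero_le _) le_rfl
  have hQ := Q.level_add_numDown hf (Nat.zero_le _) le_rfl
  have hP' := P.numUp_add_numDown hf (Nat.zero_le _) le_rfl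
  have hQ' := Q.numUp_add_numDown hf (Nat.zero_le _) le_rfl
  simp only [getVert_zero, getVert_length] at hP hQ
  omega

theorem start_level_le_add_numDown (hf : G.IsLevelFunction f) (P : G.Walk a b) {k : ℕ}
    (hk : k ≤ P.length) :
    f a ≤ f (P.getVert k) + P.numDown f 0 P.length := by
  have hlevel := P.level_add_numDown hf (Nat.zero_le k) hk
  have hsplit := P.numDown_add_numDown (f := f) (Nat.zero_le k) hk
  rw [getVert_zero] at hlevel
  omega

theorem min_level_add_numDown (hf : G.IsLevelFunction f) (P : G.Walk a b) {i : ℕ}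
    (hi : 1 ≤ i) (hil : i ≤ P.length) :
    min (f (P.getVert (i - 1))) (f (P.getVert i)) + P.numDown f 0 i =
      f a + P.numUp f 0 (i - 1) := by
  obtain ⟨m, rfl⟩ : ∃ m, i = m + 1 := ⟨i - 1, by omega⟩
  have hlevel := P.level_add_numDown hf (Nat.zero_le m) (by omega)
  rw [getVert_zero] at hlevel
  rw [Nat.add_sub_cancel, P.numDown_add_one (Nat.zero_le m)]
  rcases hf (P.adj_getVert_succ (by omega : m < P.length)) with h | h <;> split_ifs <;> omega

end Walk

end SimpleGraph

open SimpleGraph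

theorem cubeGraph_isLevelFunction_hammingDist {n : ℕ} (u : Fin n → Bool) :
    (cubeGraph n).IsLevelFunction (hammingDist u) := by
  intro x y hxy
  have hxy : hammingDist x y = 1 := hxy
  have hle := hammingDist_triangle u x y
  have hge := hammingDist_triangle u y x
  rw [hammingDist_comm y x] at hge
  have hne : hammingDist u x ≠ hammingDist u y := fun h => by
    have := hammingDist_cast_zmodTwo u x y
    rw [← h, hxy] at this
    simp at this
  omega

theorem stmt_13_general (n : ℕ) (u : Fin n → Bool)
    (sstar tp s : Fin n → Bool)
    (lstar : ℕ)
    (Pstar : (cubeGraph n).Walk sstar tp)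
    (hPstarlen : Pstar.length = lstar)
    (hPstars : Pstar.getVert (lstar - 2) = s) :
    ∀ P : (cubeGraph n).Walk sstar tp, P.length = lstar →
      ∀ i ∈ Finset.Icc 1 lstar,
        min (hammingDist u (P.getVert (i - 1))) (hammingDist u (P.getVert i)) ≤
          hammingDist u s +
          ((Finset.Icc 1 (i - 1)).filter
            (fun j => hammingDist u (P.getVert j) =
              hammingDist u (P.getVert (j - 1)) + 1)).card +
          ((Finset.Icc (i + 1) lstar).filter
            (fun j => hammingDist u (P.getVert (j - 1)) =
              hammingDist u (P.getVert j) + 1)).card := by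
  intro P hP i hi
  obtain ⟨hi1, hil⟩ := mem_Icc.1 hi
  have hf := cubeGraph_isLevelFunction_hammingDist u
  have hstart := hPstars ▸ Pstar.start_level_le_add_numDown hf (k := lstar - 2) (by omega)
  have hdown := Walk.numDown_eq_of_length_eq hf Pstar P (by omega)
  have hmin := P.min_level_add_numDown hf hi1 (by omega)
  have hsplit := P.numDown_add_numDown (f := hammingDist u) (Nat.zero_le i) hil
  rw [Icc_add_one_left_eq_Ioc, show Icc 1 (i - 1) = Ioc 0 (i - 1) from Icc_add_one_left_eq_Ioc 0 _]
  change _ ≤ _ + P.numUp _ 0 (i - 1) + P.numDown _ i lstar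
  rw [hPstarlen] at hstart
  rw [hPstarlen, hP] at hdown
  omega

/-- Fix an origin `u` and let `L(v) = d(u,v)` be the level of a vertex.
If `P*` is a path of length `ℓ*` from `s*` to `t'` whose `(ℓ*-1)`-th step is an up arrow
from `s` to `t`, then for every walk `P` of length `ℓ*` from `s*` to `t'` and every step
`i ∈ {1,…,ℓ*}`, the level of the `i`-th step of `P` is at most
`L(s) + n_{↑,b}(P,i) + n_{↓,a}(P,i)`, where `n_{↑,b}(P,i)` counts up arrows among steps
`1,…,i-1` and `n_{↓,a}(P,i)` counts down arrows among steps `i+1,…,ℓ*`. -/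
theorem stmt_13 (n : ℕ) (u : Fin n → Bool)
    (sstar tp s t : Fin n → Bool)
    (lstar : ℕ) (hlstar : 2 ≤ lstar)
    (Pstar : (cubeGraph n).Walk sstar tp)
    (hPstarlen : Pstar.length = lstar)
    (hPstars : Pstar.getVert (lstar - 2) = s)
    (hPstart : Pstar.getVert (lstar - 1) = t)
    (hup : hammingDist u t = hammingDist u s + 1) :
    ∀ P : (cubeGraph n).Walk sstar tp, P.length = lstar →
      ∀ i ∈ Finset.Icc 1 lstar,
        min (hammingDist u (P.getVert (i - 1))) (hammingDist u (P.getVert i)) ≤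
          hammingDist u s +
          ((Finset.Icc 1 (i - 1)).filter
            (fun j => hammingDist u (P.getVert j) =
              hammingDist u (P.getVert (j - 1)) + 1)).card +
          ((Finset.Icc (i + 1) lstar).filter
            (fun j => hammingDist u (P.getVert (j - 1)) =
              hammingDist u (P.getVert j) + 1)).card :=
  stmt_13_general n u sstar tp s lstar Pstar hPstarlen hPstars
end

section
/- Let ψ, ψ' : {0,1}^n → ℂ be functions with ψ(x) ≠ 0 and ψ'(x) ≠ 0 for all x, written as ψ(x) = |ψ(x)|·e^{iφ(x)} and ψ'(x) = |ψ'(x)|·e^{iφ'(x)}. Suppose there is ε ≥ 0 such that for every x ∈ {0,1}^n: |log|ψ(x)| − log|ψ'(x)|| ≤ ε/2 and |φ(x) − φ'(x)| ≤ ε/2. Then |⟨ψ', ψ⟩|² / (⟨ψ, ψ⟩·⟨ψ', ψ'⟩) ≥ 1 − ε², where ⟨ψ', ψ⟩ = ∑_{x∈{0,1}^n} conj(ψ'(x))·ψ(x). -/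
/-!
Write `ψ = a e^{iφ}`, `ψ' = b e^{iφ'}` and `δ = ε/2`. Each term of `⟨ψ', ψ⟩` has real part
`a b cos (φ - φ') ≥ cos δ · a b`, while `a / b = e^t` with `|t| ≤ δ` gives
`a² + b² = 2 cosh t · a b ≤ 2 cosh δ · a b`. Summing, and using AM-GM on `‖ψ‖² ‖ψ'‖²`, the fidelity
is at least `(cos δ / cosh δ)²`; finally `cos δ ≥ 1 - δ²/2` and `cosh δ ≤ e^{δ²/2}` give
`(cos δ / cosh δ)² ≥ 1 - 2δ² ≥ 1 - ε²`.
-/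

open Complex Finset

namespace Real

lemma sq_add_sq_le_two_cosh_mul {a b δ : ℝ} (ha : 0 < a) (hb : 0 < b)
    (h : |log a - log b| ≤ δ) : a ^ 2 + b ^ 2 ≤ 2 * cosh δ * (a * b) := by
  have hcosh : cosh (log a - log b) ≤ cosh δ :=
    cosh_le_cosh.mpr (h.trans (le_abs_self δ))
  have hsq : a ^ 2 + b ^ 2 = 2 * cosh (log a - log b) * (a * b) := by
    rw [cosh_eq, exp_sub, neg_sub, exp_sub, exp_log ha, exp_log hb]
    field_simp
  rw [hsq]
  gcongr

lemma one_sub_two_mul_sq_le_sq_cos_div_cosh (δ : ℝ) :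
    1 - 2 * δ ^ 2 ≤ (cos δ / cosh δ) ^ 2 := by
  rcases le_or_gt (1 - δ ^ 2) 0 with hδ | hδ
  · nlinarith [sq_nonneg (cos δ / cosh δ)]
  have hcos : 1 - δ ^ 2 ≤ cos δ ^ 2 := by
    nlinarith [one_sub_sq_div_two_le_cos (x := δ)]
  have hcosh : 1 - δ ^ 2 ≤ (cosh δ ^ 2)⁻¹ := by
    calc 1 - δ ^ 2 ≤ exp (-δ ^ 2) := one_sub_le_exp_neg _
      _ = (exp (δ ^ 2 / 2) ^ 2)⁻¹ := by rw [← exp_nat_mul, exp_neg]; ring_nf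
      _ ≤ (cosh δ ^ 2)⁻¹ := by gcongr; exact cosh_le_exp_half_sq δ
  calc 1 - 2 * δ ^ 2 ≤ (1 - δ ^ 2) * (1 - δ ^ 2) := by nlinarith
    _ ≤ cos δ ^ 2 * (cosh δ ^ 2)⁻¹ := by gcongr
    _ = (cos δ / cosh δ) ^ 2 := by ring

end Real

lemma re_conj_mul_polar (r r' θ θ' : ℝ) :
    (starRingEnd ℂ (r' * exp (I * θ')) * (r * exp (I * θ))).re = r * r' * Real.cos (θ - θ') := by
  rw [map_mul, ← exp_conj, mul_mul_mul_comm, ← exp_add]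
  simp only [conj_ofReal, map_mul, conj_I]
  rw [show -I * θ' + I * θ = ((θ - θ' : ℝ) : ℂ) * I by push_cast; ring, ← ofReal_mul,
    re_ofReal_mul, exp_ofReal_mul_I_re, mul_comm r']

lemma sq_div_mul_sum_sq_le_norm_sum_conj_mul_sq {ι : Type*} [Fintype ι] (z w : ι → ℂ) {c C : ℝ}
    (hc : 0 ≤ c) (hre : ∀ x, c * (‖z x‖ * ‖w x‖) ≤ (starRingEnd ℂ (w x) * z x).re)
    (hsq : ∀ x, ‖z x‖ ^ 2 + ‖w x‖ ^ 2 ≤ 2 * C * (‖z x‖ * ‖w x‖)) :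
    (c / C) ^ 2 * ((∑ x, ‖z x‖ ^ 2) * (∑ x, ‖w x‖ ^ 2)) ≤ ‖∑ x, starRingEnd ℂ (w x) * z x‖ ^ 2 := by
  set S := ∑ x, ‖z x‖ * ‖w x‖
  have hS : 0 ≤ S := by positivity
  have hlower : c * S ≤ ‖∑ x, starRingEnd ℂ (w x) * z x‖ :=
    calc c * S ≤ ∑ x, (starRingEnd ℂ (w x) * z x).re := by
          rw [mul_sum]; exact sum_le_sum fun x _ => hre x
      _ = (∑ x, starRingEnd ℂ (w x) * z x).re := (re_sum _ _).symm
      _ ≤ _ := re_le_norm _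
  have hupper : ∑ x, ‖z x‖ ^ 2 + ∑ x, ‖w x‖ ^ 2 ≤ 2 * C * S := by
    rw [← sum_add_distrib, mul_sum]; exact sum_le_sum fun x _ => hsq x
  have hamgm : (∑ x, ‖z x‖ ^ 2) * (∑ x, ‖w x‖ ^ 2) ≤ C ^ 2 * S ^ 2 := by
    nlinarith [four_mul_le_sq_add (∑ x, ‖z x‖ ^ 2) (∑ x, ‖w x‖ ^ 2),
      pow_le_pow_left₀ (by positivity) hupper 2]
  calc (c / C) ^ 2 * ((∑ x, ‖z x‖ ^ 2) * (∑ x, ‖w x‖ ^ 2))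
      ≤ (c / C) ^ 2 * (C ^ 2 * S ^ 2) := by gcongr
    _ ≤ (c * S) ^ 2 := by
        rcases eq_or_ne C 0 with rfl | hC
        · simp only [div_zero, ne_eq, OfNat.ofNat_ne_zero, not_false_eq_true, zero_pow, zero_mul]
          positivity
        · exact le_of_eq (by field_simp)
    _ ≤ _ := by gcongr

/-- If the log-magnitudes and phases of the (nowhere-vanishing)
amplitude functions `ψ` and `ψ'` agree pointwise up to `ε/2`, then the fidelity of the
corresponding normalized states is at least `1 - ε²`. -/
theorem stmt_15 (n : ℕ)
    (ψ ψ' : (Fin n → Bool) → ℂ)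
    (hψ : ∀ x, ψ x ≠ 0) (hψ' : ∀ x, ψ' x ≠ 0)
    (φ φ' : (Fin n → Bool) → ℝ)
    (hphase : ∀ x, ψ x = (‖ψ x‖ : ℝ) * Complex.exp (Complex.I * (φ x : ℝ)))
    (hphase' : ∀ x, ψ' x = (‖ψ' x‖ : ℝ) * Complex.exp (Complex.I * (φ' x : ℝ)))
    (ε : ℝ) (hε : 0 ≤ ε)
    (hmag : ∀ x, |Real.log (‖ψ x‖) - Real.log (‖ψ' x‖)| ≤ ε / 2)
    (hph : ∀ x, |φ x - φ' x| ≤ ε / 2) :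
    1 - ε ^ 2 ≤
      ‖∑ x, starRingEnd ℂ (ψ' x) * ψ x‖ ^ 2 /
        ((∑ x, ‖ψ x‖ ^ 2) * (∑ x, ‖ψ' x‖ ^ 2)) := by
  rcases le_or_gt 1 ε with hε1 | hε1
  · exact (by nlinarith : 1 - ε ^ 2 ≤ 0).trans (by positivity)
  have hcos : 0 ≤ Real.cos (ε / 2) :=
    Real.cos_nonneg_of_mem_Icc ⟨by linarith [Real.pi_gt_three], by linarith [Real.pi_gt_three]⟩
  have hre : ∀ x, Real.cos (ε / 2) * (‖ψ x‖ * ‖ψ' x‖) ≤ (starRingEnd ℂ (ψ' x) * ψ x).re := by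
    intro x
    conv_rhs => rw [hphase x, hphase' x, re_conj_mul_polar]
    rw [mul_comm, ← Real.cos_abs (φ x - φ' x)]
    gcongr
    exact Real.cos_le_cos_of_nonneg_of_le_pi (abs_nonneg _) (by linarith [Real.pi_gt_three]) (hph x)
  have ha x : 0 < ‖ψ x‖ := norm_pos_iff.mpr (hψ x)
  have hb x : 0 < ‖ψ' x‖ := norm_pos_iff.mpr (hψ' x)
  have hsq : ∀ x, ‖ψ x‖ ^ 2 + ‖ψ' x‖ ^ 2 ≤ 2 * Real.cosh (ε / 2) * (‖ψ x‖ * ‖ψ' x‖) := fun x =>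
    Real.sq_add_sq_le_two_cosh_mul (ha x) (hb x) (hmag x)
  have hnorms : 0 < (∑ x, ‖ψ x‖ ^ 2) * (∑ x, ‖ψ' x‖ ^ 2) :=
    mul_pos (sum_pos (fun x _ => pow_pos (ha x) 2) univ_nonempty)
      (sum_pos (fun x _ => pow_pos (hb x) 2) univ_nonempty)
  rw [le_div_iff₀ hnorms]
  calc (1 - ε ^ 2) * ((∑ x, ‖ψ x‖ ^ 2) * (∑ x, ‖ψ' x‖ ^ 2))
      ≤ (Real.cos (ε / 2) / Real.cosh (ε / 2)) ^ 2 * ((∑ x, ‖ψ x‖ ^ 2) * (∑ x, ‖ψ' x‖ ^ 2)) := by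
        gcongr
        linarith [Real.one_sub_two_mul_sq_le_sq_cos_div_cosh (ε / 2), sq_nonneg ε]
    _ ≤ _ := sq_div_mul_sum_sq_le_norm_sum_conj_mul_sq ψ ψ' hcos hre hsq
end

section
/- Let α₀, α₁ ∈ ℂ with |α₀|² + |α₁|² = 1, and define the probability distribution π on {0,1}^n by π(x) = |α₀ + α₁|²/2^n if x has even Hamming weight and π(x) = |α₀ − α₁|²/2^n if x has odd Hamming weight. Set α_max = max(|α₀ + α₁|², |α₀ − α₁|²) and α_min = min(|α₀ + α₁|², |α₀ − α₁|²), and assume α_min > 0. Let P be the level-1 transition matrix: P(x,y) = (1/n)·π(y)/(π(x)+π(y)) if d(x,y) = 1, P(x,x) = (1/n)·∑_{x' : d(x,x')=1} π(x)/(π(x)+π(x')), and P(x,y) = 0 otherwise, and set Q(e) = π(e⁺)P(e⁺,e⁻) for a directed edge e = (e⁺,e⁻). Then there is a universal constant C > 0 and a set of canonical paths Γ = {γ_xy} in the hypercube whose congestion ρ(Γ) = max_e (1/Q(e)) · ∑_{(x,y) : e ∈ γ_xy} π(x)π(y)·|γ_xy| satisfies ρ(Γ) ≤ C·n²·α_max²/α_min.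 -/
/-!
Route every pair `(x, y)` along the bit-fixing path, which corrects the differing bits of `x`
in increasing order of index. If such a path crosses an edge flipping bit `i`, then `x` is
recovered from the edge on the bits `≥ i` and `y` on the bits `≤ i`, so at most `2ⁿ⁻¹` pairs use
any given edge. Each of them contributes at most `n α_max² / 4ⁿ`, while every edge carries flow
`Q(e) ≥ α_min / (2ⁿ⁺¹ n)`, because `π` takes only the values `|α₀ ± α₁|² / 2ⁿ` and
`pq / (p + q) ≥ min(p, q) / 2`. This gives the bound with `C = 1`.
-/

open Finset
open scoped Classical

lemma half_le_mul_div_add {a p q : ℝ} (ha : 0 < a) (hp : a ≤ p) (hq : a ≤ q) :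
    a / 2 ≤ p * q / (p + q) := by
  rw [div_le_div_iff₀ two_pos (by linarith)]
  nlinarith

namespace BitFixing

variable {n : ℕ}

def diffSet (x y : Fin n → Bool) : Finset (Fin n) :=
  univ.filter fun i => x i ≠ y i

lemma mem_diffSet {x y : Fin n → Bool} {j : Fin n} : j ∈ diffSet x y ↔ x j ≠ y j := by
  simp [diffSet]

lemma hammingDist_eq_card_diffSet (x y : Fin n → Bool) :
    hammingDist x y = (diffSet x y).card := rfl

lemma diffSet_nonempty {x y : Fin n → Bool} (h : x ≠ y) : (diffSet x y).Nonempty := by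
  obtain ⟨j, hj⟩ := Function.ne_iff.1 h
  exact ⟨j, mem_diffSet.2 hj⟩

lemma diffSet_update (x y : Fin n → Bool) (i : Fin n) :
    diffSet (Function.update x i (y i)) y = (diffSet x y).erase i := by
  ext j
  rcases eq_or_ne j i with rfl | hj
  · simp [mem_diffSet]
  · simp [mem_diffSet, hj]

lemma hammingDist_update_lt {x y : Fin n → Bool} {i : Fin n} (hi : x i ≠ y i) :
    hammingDist (Function.update x i (y i)) y < hammingDist x y := by
  rw [hammingDist_eq_card_diffSet, hammingDist_eq_card_diffSet, diffSet_update]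
  exact card_erase_lt_of_mem (mem_diffSet.2 hi)

lemma cubeGraph_adj_update {x : Fin n → Bool} {i : Fin n} {b : Bool} (hi : x i ≠ b) :
    (cubeGraph n).Adj x (Function.update x i b) := by
  show hammingDist _ _ = 1
  rw [hammingDist_comm, hammingDist_eq_card_diffSet, card_eq_one]
  refine ⟨i, ?_⟩
  ext j
  rcases eq_or_ne j i with rfl | hj
  · simp [mem_diffSet, Ne.symm hi]
  · simp [mem_diffSet, hj]

noncomputable def bitFixingPath : ∀ x y : Fin n → Bool, (cubeGraph n).Walk x y
  | x, y =>
    if h : x = y then h ▸ SimpleGraph.Walk.nil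
    else
      have hi : x ((diffSet x y).min' (diffSet_nonempty h)) ≠
          y ((diffSet x y).min' (diffSet_nonempty h)) :=
        mem_diffSet.1 ((diffSet x y).min'_mem _)
      .cons (cubeGraph_adj_update hi)
        (bitFixingPath (Function.update x ((diffSet x y).min' (diffSet_nonempty h))
          (y ((diffSet x y).min' (diffSet_nonempty h)))) y)
  termination_by x y => hammingDist x y
  decreasing_by exact hammingDist_update_lt hi

lemma length_bitFixingPath (x y : Fin n → Bool) :
    (bitFixingPath x y).length = hammingDist x y := by
  induction x, y using bitFixingPath.induct with
  | case1 y => simp [bitFixingPath]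
  | case2 x y h hi ih =>
    rw [bitFixingPath, dif_neg h, SimpleGraph.Walk.length_cons, ih,
      hammingDist_eq_card_diffSet, hammingDist_eq_card_diffSet, diffSet_update,
      card_erase_add_one ((diffSet x y).min'_mem _)]

lemma hammingDist_le_of_mem_support_bitFixingPath {x y v : Fin n → Bool}
    (hv : v ∈ (bitFixingPath x y).support) : hammingDist v y ≤ hammingDist x y := by
  induction x, y using bitFixingPath.induct with
  | case1 y => simp_all [bitFixingPath]
  | case2 x y h hi ih =>
    rw [bitFixingPath, dif_neg h, SimpleGraph.Walk.support_cons, List.mem_cons] at hv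
    rcases hv with rfl | hv
    · exact le_rfl
    · exact (ih hv).trans (hammingDist_update_lt hi).le

lemma isPath_bitFixingPath (x y : Fin n → Bool) : (bitFixingPath x y).IsPath := by
  induction x, y using bitFixingPath.induct with
  | case1 y => simp [bitFixingPath]
  | case2 x y h hi ih =>
    rw [bitFixingPath, dif_neg h]
    exact ih.cons fun hx =>
      (hammingDist_update_lt hi).not_ge (hammingDist_le_of_mem_support_bitFixingPath hx)

lemma update_min'_diffSet_eq_of_le {x y : Fin n → Bool} (hne : (diffSet x y).Nonempty)
    {j : Fin n} (hj : j ≤ (diffSet x y).min' hne) :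
    Function.update x ((diffSet x y).min' hne) (y ((diffSet x y).min' hne)) j = y j := by
  rcases hj.lt_or_eq with hj | rfl
  · rw [Function.update_of_ne hj.ne]
    by_contra hxy
    exact hj.not_ge ((diffSet x y).min'_le j (mem_diffSet.2 hxy))
  · exact Function.update_self ..

lemma bitFixingPath_dart_agree {x y : Fin n → Bool} {d : (cubeGraph n).Dart}
    (hd : d ∈ (bitFixingPath x y).darts) {i : Fin n} (hi : d.fst i ≠ d.snd i) :
    (∀ j, i ≤ j → d.fst j = x j) ∧ (∀ j, j ≤ i → d.snd j = y j) := by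
  induction x, y using bitFixingPath.induct with
  | case1 y => simp [bitFixingPath] at hd
  | case2 x y h hi₀ ih =>
    set i₀ := (diffSet x y).min' (diffSet_nonempty h)
    rw [bitFixingPath, dif_neg h, SimpleGraph.Walk.darts_cons, List.mem_cons] at hd
    rcases hd with rfl | hd
    · obtain rfl : i = i₀ := by
        by_contra hii
        exact hi (Function.update_of_ne hii _ _).symm
      exact ⟨fun _ _ => rfl, fun j hj => update_min'_diffSet_eq_of_le _ hj⟩
    · obtain ⟨h₁, h₂⟩ := ih hd
      have hi' : i ∈ (diffSet x y).erase i₀ := by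
        rw [← diffSet_update, mem_diffSet, ← h₁ i le_rfl, ← h₂ i le_rfl]
        exact hi
      have hlt : i₀ < i := ((diffSet x y).min'_le i (mem_of_mem_erase hi')).lt_of_ne
        (ne_of_mem_erase hi').symm
      refine ⟨fun j hj => ?_, h₂⟩
      rw [h₁ j hj, Function.update_of_ne (hlt.trans_le hj).ne']

noncomputable def pairsThrough (e₁ e₂ : Fin n → Bool) :
    Finset ((Fin n → Bool) × (Fin n → Bool)) :=
  univ.filter fun p => p.1 ≠ p.2 ∧ ∃ d ∈ (bitFixingPath p.1 p.2).darts, d.toProd = (e₁, e₂)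

lemma card_pairsThrough_le {e₁ e₂ : Fin n → Bool} {i : Fin n} (hi : e₁ i ≠ e₂ i) :
    (pairsThrough e₁ e₂).card ≤ 2 ^ (n - 1) := by
  have agree : ∀ p ∈ pairsThrough e₁ e₂,
      (∀ j, i ≤ j → p.1 j = e₁ j) ∧ (∀ j, j ≤ i → p.2 j = e₂ j) := by
    intro p hp
    obtain ⟨-, d, hd, hde⟩ := (mem_filter.1 hp).2
    have hfst : d.fst = e₁ := congrArg Prod.fst hde
    have hsnd : d.snd = e₂ := congrArg Prod.snd hde
    obtain ⟨h₁, h₂⟩ := bitFixingPath_dart_agree hd (i := i) (by rwa [hfst, hsnd])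
    rw [hfst] at h₁
    rw [hsnd] at h₂
    exact ⟨fun j hj => (h₁ j hj).symm, fun j hj => (h₂ j hj).symm⟩
  calc (pairsThrough e₁ e₂).card
      ≤ (univ : Finset ({j : Fin n // j ≠ i} → Bool)).card := by
        refine card_le_card_of_injOn (fun p j => if (j : Fin n) < i then p.1 j else p.2 j)
          (fun _ _ => mem_univ _) fun p hp q hq hpq => ?_
        obtain ⟨hp₁, hp₂⟩ := agree p hp
        obtain ⟨hq₁, hq₂⟩ := agree q hq
        have hpq : ∀ j, j ≠ i → (if j < i then p.1 j else p.2 j) = if j < i then q.1 j else q.2 j :=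
          fun j hj => congrFun hpq ⟨j, hj⟩
        ext j : 2
        · rcases lt_or_ge j i with hj | hj
          · simpa [hj] using hpq j hj.ne
          · rw [hp₁ j hj, hq₁ j hj]
        · rcases le_or_gt j i with hj | hj
          · rw [hp₂ j hj, hq₂ j hj]
          · simpa [hj.not_gt] using hpq j hj.ne'
    _ = 2 ^ (n - 1) := by simp [Fintype.card_subtype_compl]

lemma sum_bitFixingPath_through_le {π : (Fin n → Bool) → ℝ} {b : ℝ} (hπ₀ : ∀ v, 0 ≤ π v)
    (hπb : ∀ v, π v ≤ b) {e₁ e₂ : Fin n → Bool} {i : Fin n} (hi : e₁ i ≠ e₂ i) :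
    (∑ x, ∑ y, if x ≠ y ∧ (∃ d ∈ (bitFixingPath x y).darts, d.toProd = (e₁, e₂)) then
        π x * π y * ((bitFixingPath x y).length : ℝ) else 0) ≤ 2 ^ (n - 1) * (b ^ 2 * n) := by
  rw [← sum_product', univ_product_univ, ← sum_filter]
  change ∑ p ∈ pairsThrough e₁ e₂, _ ≤ _
  calc ∑ p ∈ pairsThrough e₁ e₂, π p.1 * π p.2 * ((bitFixingPath p.1 p.2).length : ℝ)
      ≤ ∑ p ∈ pairsThrough e₁ e₂, b ^ 2 * n := by
        refine sum_le_sum fun p _ => ?_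
        have hlen : ((bitFixingPath p.1 p.2).length : ℝ) ≤ n := by
          rw [length_bitFixingPath]
          exact_mod_cast hammingDist_le_card_fintype.trans (Fintype.card_fin n).le
        have hb : 0 ≤ b := (hπ₀ p.1).trans (hπb p.1)
        rw [sq]
        gcongr
        exacts [hπ₀ _, hπb _, hπb _]
    _ = (pairsThrough e₁ e₂).card * (b ^ 2 * n) := by rw [sum_const, nsmul_eq_mul]
    _ ≤ 2 ^ (n - 1) * (b ^ 2 * n) := by
        gcongr
        exact_mod_cast card_pairsThrough_le hi

lemma congestion_bitFixingPath_le {π : (Fin n → Bool) → ℝ} {a b : ℝ} (ha : 0 < a)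
    (hπa : ∀ v, a ≤ π v) (hπb : ∀ v, π v ≤ b) {e₁ e₂ : Fin n → Bool}
    (he : hammingDist e₁ e₂ = 1) :
    (∑ x, ∑ y, if x ≠ y ∧ (∃ d ∈ (bitFixingPath x y).darts, d.toProd = (e₁, e₂)) then
        π x * π y * ((bitFixingPath x y).length : ℝ) else 0) /
      (π e₁ * (1 / (n : ℝ) * (π e₂ / (π e₁ + π e₂)))) ≤ 2 ^ n * (n : ℝ) ^ 2 * b ^ 2 / a := by
  obtain ⟨i, hi⟩ := Function.ne_iff.1 (hammingDist_ne_zero.1 (he ▸ one_ne_zero))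
  have hn : (0 : ℝ) < n := by exact_mod_cast i.pos
  have hflow : a / (2 * n) ≤ π e₁ * (1 / (n : ℝ) * (π e₂ / (π e₁ + π e₂))) := by
    rw [show π e₁ * (1 / (n : ℝ) * (π e₂ / (π e₁ + π e₂))) = π e₁ * π e₂ / (π e₁ + π e₂) / n by
      ring, ← div_div]
    exact div_le_div_of_nonneg_right (half_le_mul_div_add ha (hπa e₁) (hπa e₂)) hn.le
  have hpow : (2 : ℝ) ^ n = 2 ^ (n - 1) * 2 := by rw [← pow_succ, Nat.sub_add_cancel i.pos]
  calc _ ≤ 2 ^ (n - 1) * (b ^ 2 * n) / (a / (2 * n)) :=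
        div_le_div₀ (by positivity)
          (sum_bitFixingPath_through_le (fun v => ha.le.trans (hπa v)) hπb hi) (by positivity)
          hflow
    _ = 2 ^ n * (n : ℝ) ^ 2 * b ^ 2 / a := by
        rw [hpow]
        field_simp

end BitFixing

/-- For the measurement distribution of
`H^{⊗n}(α₀|0…0⟩ + α₁|1…1⟩)` — which assigns `|α₀+α₁|²/2ⁿ` to even-weight strings and
`|α₀-α₁|²/2ⁿ` to odd-weight strings — there is a universal constant `C > 0` and a set of
canonical simple paths in the hypercube whose congestion is at most
`C n² α_max²/α_min`. -/
theorem stmt_16 :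
    ∃ C > (0 : ℝ), ∀ n : ℕ, 1 ≤ n → ∀ α₀ α₁ : ℂ,
      ‖α₀‖ ^ 2 + ‖α₁‖ ^ 2 = 1 →
      ∀ π : (Fin n → Bool) → ℝ,
      (∀ x, π x = if Even ((Finset.univ.filter fun i => x i).card)
        then ‖α₀ + α₁‖ ^ 2 / 2 ^ n
        else ‖α₀ - α₁‖ ^ 2 / 2 ^ n) →
      ∀ αmax αmin : ℝ,
      αmax = max (‖α₀ + α₁‖ ^ 2) (‖α₀ - α₁‖ ^ 2) →
      αmin = min (‖α₀ + α₁‖ ^ 2) (‖α₀ - α₁‖ ^ 2) →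
      0 < αmin →
      ∃ γ : ∀ x y : Fin n → Bool, (cubeGraph n).Walk x y,
        (∀ x y : Fin n → Bool, x ≠ y → (γ x y).IsPath) ∧
        ∀ e₁ e₂ : Fin n → Bool, hammingDist e₁ e₂ = 1 →
          (∑ x, ∑ y,
            if x ≠ y ∧ (∃ d ∈ (γ x y).darts, d.toProd = (e₁, e₂)) then
              π x * π y * ((γ x y).length : ℝ)
            else 0) /
          (π e₁ * (1 / (n : ℝ) * (π e₂ / (π e₁ + π e₂)))) ≤
          C * (n : ℝ) ^ 2 * αmax ^ 2 / αmin := by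
  refine ⟨1, one_pos, fun n _ α₀ α₁ _ π hπ αmax αmin hmax hmin hmin_pos =>
    ⟨BitFixing.bitFixingPath, fun x y _ => BitFixing.isPath_bitFixingPath x y,
      fun e₁ e₂ he => ?_⟩⟩
  have hπ_ge : ∀ v, αmin / 2 ^ n ≤ π v := fun v => by
    rw [hπ, hmin]
    split_ifs <;> gcongr
    exacts [min_le_left _ _, min_le_right _ _]
  have hπ_le : ∀ v, π v ≤ αmax / 2 ^ n := fun v => by
    rw [hπ, hmax]
    split_ifs <;> gcongr
    exacts [le_max_left _ _, le_max_right _ _]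
  calc _ ≤ 2 ^ n * (n : ℝ) ^ 2 * (αmax / 2 ^ n) ^ 2 / (αmin / 2 ^ n) :=
        BitFixing.congestion_bitFixingPath_le (by positivity) hπ_ge hπ_le he
    _ = 1 * (n : ℝ) ^ 2 * αmax ^ 2 / αmin := by
        field_simp
end

section
/- Let π be a strictly positive probability distribution on {0,1}^n, φ : {0,1}^n → ℝ, and ψ(x) = √π(x)·e^{iφ(x)}. Let L be the level-1 observable: L(x,y) = (1/n)·(√(π(x)π(y))/(π(x)+π(y)))·e^{i(φ(x)−φ(y))} if d(x,y) = 1, L(x,x) = (1/n)·∑_{x' : d(x,x')=1} π(x)/(π(x)+π(x')), and L(x,y) = 0 otherwise. Set d = 2^n. Then Tr(L) = d/2, and for every F ∈ [0,1] the white-noise density matrix ρ_F = F·|ψ⟩⟨ψ| + (1−F)·I/d satisfies Tr(L·ρ_F) = (1 + F)/2. -/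
/-!
The heart of the matter is that `ψ` is an eigenvector of `L` with eigenvalue `1`: for a neighbour
`y` of `x`, the phases cancel and `L x y * ψ y = π y / (π x + π y) / n * ψ x`, while the diagonal
entry contributes `π x / (π x + π y) / n` per neighbour, so the `n` neighbours add up to `ψ x`.
Hence `Tr(L |ψ⟩⟨ψ|) = ⟨ψ, L ψ⟩ = ∑ π = 1`. For `Tr L`, every edge `{x, y}` of the hypercube
appears twice in the diagonal sums, with weights adding up to `1`, so `Tr L = (n 2ⁿ / 2) / n`.
The rest is linearity of `ρ_F ↦ Tr(L ρ_F)`.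
-/

open Matrix Complex Finset

section Hypercube

variable {ι : Type*} [Fintype ι] [DecidableEq ι]

theorem hammingDist_eq_one_iff_exists_update {x y : ι → Bool} :
    hammingDist x y = 1 ↔ ∃ i, y = Function.update x i (!x i) := by
  constructor
  · intro h
    obtain ⟨i, hi⟩ := card_eq_one.mp h
    have hne (j : ι) : x j ≠ y j ↔ j = i := by simpa using Finset.ext_iff.mp hi j
    refine ⟨i, funext fun j => ?_⟩
    rcases eq_or_ne j i with rfl | hj
    · simpa [Bool.eq_not_iff, eq_comm] using (hne j).mpr rfl
    · simpa [hj, eq_comm] using mt (hne j).mp hj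
  · rintro ⟨i, rfl⟩
    refine card_eq_one.mpr ⟨i, Finset.ext fun j => ?_⟩
    rcases eq_or_ne j i with rfl | hj <;> simp [*]

theorem card_filter_hammingDist_eq_one (x : ι → Bool) :
    #{y | hammingDist x y = 1} = Fintype.card ι := by
  have himage : ({y | hammingDist x y = 1} : Finset (ι → Bool)) =
      univ.image fun i => Function.update x i (!x i) := by
    ext y
    simp [hammingDist_eq_one_iff_exists_update, eq_comm (b := y)]
  rw [himage, card_image_of_injective _ fun i j hij => ?_, card_univ]
  by_contra hne
  simpa [Function.update_of_ne hne] using congrFun hij i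

end Hypercube

theorem sum_sum_filter_comm {α M : Type*} [Fintype α] [AddCommMonoid M] {r : α → α → Prop}
    [DecidableRel r] (hr : ∀ x y, r x y → r y x) (f : α → α → M) :
    ∑ x, ∑ y ∈ {y | r x y}, f x y = ∑ x, ∑ y ∈ {y | r x y}, f y x := by
  simp only [sum_filter]
  rw [sum_comm]
  exact sum_congr rfl fun x _ => sum_congr rfl fun y _ => if_congr ⟨hr y x, hr x y⟩ rfl rfl

theorem sum_sum_filter_eq_half {α K : Type*} [Fintype α] [Field K] [CharZero K]
    {r : α → α → Prop} [DecidableRel r] (hr : ∀ x y, r x y → r y x) (w : α → α → K)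
    (hw : ∀ x y, r x y → w x y + w y x = 1) :
    ∑ x, ∑ y ∈ {y | r x y}, w x y = (∑ x, (#{y | r x y} : K)) / 2 := by
  have htwice : 2 * ∑ x, ∑ y ∈ {y | r x y}, w x y = ∑ x, (#{y | r x y} : K) := by
    rw [two_mul]
    nth_rewrite 2 [sum_sum_filter_comm hr]
    rw [← sum_add_distrib]
    refine sum_congr rfl fun x _ => ?_
    rw [← sum_add_distrib, cast_card]
    exact sum_congr rfl fun y hy => hw x y (mem_filter.mp hy).2
  rw [← htwice]
  ring

theorem dotProduct_star_self_of_eq_sqrt_mul_exp {ι : Type*} [Fintype ι] {p θ : ι → ℝ}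
    {ψ : ι → ℂ} (hp : ∀ x, 0 ≤ p x) (hψ : ∀ x, ψ x = (Real.sqrt (p x) : ℝ) * exp (I * (θ x : ℝ))) :
    ψ ⬝ᵥ star ψ = ∑ x, (p x : ℂ) := by
  refine sum_congr rfl fun x _ => ?_
  rw [Pi.star_apply, star_def, mul_conj', hψ, norm_mul, norm_exp_I_mul_ofReal, mul_one,
    norm_real, Real.norm_of_nonneg (Real.sqrt_nonneg _), ← ofReal_pow, Real.sq_sqrt (hp x)]

section LevelOneObservable

variable {n : ℕ} {π φ : (Fin n → Bool) → ℝ} {ψ : (Fin n → Bool) → ℂ}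
  {L : Matrix (Fin n → Bool) (Fin n → Bool) ℂ}

structure IsLevelOneObservable (π φ : (Fin n → Bool) → ℝ)
    (L : Matrix (Fin n → Bool) (Fin n → Bool) ℂ) : Prop where
  apply_of_hammingDist_eq_one : ∀ x y, hammingDist x y = 1 →
    L x y = ((1 / (n : ℝ) * (Real.sqrt (π x * π y) / (π x + π y)) : ℝ) : ℂ) *
      exp (I * ((φ x - φ y : ℝ) : ℂ))
  apply_self : ∀ x, L x x =
    ((1 / (n : ℝ) * ∑ y ∈ {y | hammingDist x y = 1}, π x / (π x + π y) : ℝ) : ℂ)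
  apply_of_ne : ∀ x y, x ≠ y → hammingDist x y ≠ 1 → L x y = 0

namespace IsLevelOneObservable

theorem trace_eq (hL : IsLevelOneObservable π φ L) (hn : n ≠ 0) (hπpos : ∀ x, 0 < π x) :
    L.trace = ((2 ^ n / 2 : ℝ) : ℂ) := by
  have hhalf : ∑ x, ∑ y ∈ {y | hammingDist x y = 1}, π x / (π x + π y) = n * 2 ^ n / 2 := by
    rw [sum_sum_filter_eq_half (fun x y h => by rwa [hammingDist_comm]) _ fun x y _ => by
      have := hπpos x; have := hπpos y; field_simp; ring]
    simp [card_filter_hammingDist_eq_one, mul_comm]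
  simp only [trace, Matrix.diag, hL.apply_self]
  rw [← ofReal_sum, ← mul_sum, hhalf]
  congr 1
  field_simp

theorem apply_mul_of_hammingDist_eq_one (hL : IsLevelOneObservable π φ L)
    (hπpos : ∀ x, 0 < π x) (hψ : ∀ x, ψ x = (Real.sqrt (π x) : ℝ) * exp (I * (φ x : ℝ)))
    {x y : Fin n → Bool} (hxy : hammingDist x y = 1) :
    L x y * ψ y = ((1 / (n : ℝ) * (π y / (π x + π y)) : ℝ) : ℂ) * ψ x := by
  have hphase : exp (I * ((φ x - φ y : ℝ) : ℂ)) * exp (I * (φ y : ℝ)) = exp (I * (φ x : ℝ)) := by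
    rw [← exp_add]
    push_cast
    ring_nf
  have hamp : Real.sqrt (π x * π y) * Real.sqrt (π y) = π y * Real.sqrt (π x) := by
    rw [Real.sqrt_mul (hπpos x).le, mul_assoc, Real.mul_self_sqrt (hπpos y).le, mul_comm]
  have hamp' := congrArg ((↑) : ℝ → ℂ) hamp
  rw [hL.apply_of_hammingDist_eq_one x y hxy, hψ, hψ]
  push_cast at hphase hamp' ⊢
  linear_combination (1 / (n : ℂ) / (π x + π y)) *
    ((Real.sqrt (π x * π y) : ℂ) * Real.sqrt (π y) * hphase + exp (I * (φ x : ℝ)) * hamp')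

theorem mulVec_eq_self (hL : IsLevelOneObservable π φ L) (hn : n ≠ 0) (hπpos : ∀ x, 0 < π x)
    (hψ : ∀ x, ψ x = (Real.sqrt (π x) : ℝ) * exp (I * (φ x : ℝ))) :
    L *ᵥ ψ = ψ := by
  funext x
  have hrow : (L *ᵥ ψ) x = L x x * ψ x + ∑ y ∈ {y | hammingDist x y = 1}, L x y * ψ y := by
    rw [mulVec, dotProduct, ← add_sum_erase _ _ (mem_univ x)]
    congr 1
    refine (sum_subset (fun y hy => mem_erase.mpr ⟨?_, mem_univ y⟩) fun y hy hy' => ?_).symm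
    · rintro rfl
      simp at hy
    · rw [hL.apply_of_ne x y (ne_of_mem_erase hy).symm (by simpa using hy'), zero_mul]
  have hcoef : 1 / (n : ℝ) * ∑ y ∈ {y | hammingDist x y = 1}, π x / (π x + π y) +
      ∑ y ∈ {y | hammingDist x y = 1}, 1 / (n : ℝ) * (π y / (π x + π y)) = 1 := by
    rw [mul_sum, ← sum_add_distrib, sum_congr rfl fun y _ => (?_ : _ = 1 / (n : ℝ))]
    · simp [card_filter_hammingDist_eq_one, hn]
    · have := hπpos x; have := hπpos y
      field_simp
  rw [hrow, sum_congr rfl fun y hy => hL.apply_mul_of_hammingDist_eq_one hπpos hψ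
    (mem_filter.mp hy).2, ← sum_mul, hL.apply_self, ← add_mul, ← ofReal_sum, ← ofReal_add,
    hcoef, ofReal_one, one_mul]

end IsLevelOneObservable

end LevelOneObservable

theorem stmt_18_general (n : ℕ) (hn : 1 ≤ n)
    (π : (Fin n → Bool) → ℝ) (hπpos : ∀ x, 0 < π x) (hπsum : ∑ x, π x = 1)
    (φ : (Fin n → Bool) → ℝ)
    (ψ : (Fin n → Bool) → ℂ)
    (hψ : ∀ x, ψ x = (Real.sqrt (π x) : ℝ) * Complex.exp (Complex.I * (φ x : ℝ)))
    (L : Matrix (Fin n → Bool) (Fin n → Bool) ℂ)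
    (hLoff : ∀ x y, hammingDist x y = 1 →
      L x y = ((1 / (n : ℝ) * (Real.sqrt (π x * π y) / (π x + π y)) : ℝ) : ℂ) *
        Complex.exp (Complex.I * ((φ x - φ y : ℝ) : ℂ)))
    (hLdiag : ∀ x, L x x = ((1 / (n : ℝ) *
      ∑ x' ∈ Finset.univ.filter (fun x' => hammingDist x x' = 1),
        π x / (π x + π x') : ℝ) : ℂ))
    (hLfar : ∀ x y, x ≠ y → hammingDist x y ≠ 1 → L x y = 0)
    (F : ℝ)
    (d : ℕ) (hd : d = 2 ^ n)
    (ρF : Matrix (Fin n → Bool) (Fin n → Bool) ℂ)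
    (hρF : ρF = (F : ℂ) • Matrix.vecMulVec ψ (star ψ) +
      (((1 - F) / (d : ℝ) : ℝ) : ℂ) • (1 : Matrix (Fin n → Bool) (Fin n → Bool) ℂ)) :
    L.trace = ((d : ℝ) / 2 : ℝ) ∧ (L * ρF).trace = (((1 + F) / 2 : ℝ) : ℂ) := by
  have hn0 : n ≠ 0 := Nat.one_le_iff_ne_zero.mp hn
  have hL : IsLevelOneObservable π φ L := ⟨hLoff, hLdiag, hLfar⟩
  have htrace := hL.trace_eq hn0 hπpos
  have hpure : (L * vecMulVec ψ (star ψ)).trace = 1 := by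
    rw [mul_vecMulVec, hL.mulVec_eq_self hn0 hπpos hψ, trace_vecMulVec,
      dotProduct_star_self_of_eq_sqrt_mul_exp (fun x => (hπpos x).le) hψ, ← ofReal_sum, hπsum,
      ofReal_one]
  subst hd hρF
  push_cast at htrace ⊢
  refine ⟨htrace, ?_⟩
  rw [Matrix.mul_add, Matrix.mul_smul, Matrix.mul_smul, Matrix.mul_one, trace_add, trace_smul,
    trace_smul, hpure, htrace, smul_eq_mul, smul_eq_mul]
  field_simp
  ring

/-- For the level-1 shadow-overlap observable `L` of the state
`ψ(x) = √π(x) e^{iφ(x)}` (with `π > 0`), we have `Tr(L) = d/2` where `d = 2ⁿ`, and for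
the white-noise state `ρ_F = F|ψ⟩⟨ψ| + (1-F)·I/d` the expected shadow overlap is
`Tr(L ρ_F) = (1+F)/2`. -/
theorem stmt_18 (n : ℕ) (hn : 1 ≤ n)
    (π : (Fin n → Bool) → ℝ) (hπpos : ∀ x, 0 < π x) (hπsum : ∑ x, π x = 1)
    (φ : (Fin n → Bool) → ℝ)
    (ψ : (Fin n → Bool) → ℂ)
    (hψ : ∀ x, ψ x = (Real.sqrt (π x) : ℝ) * Complex.exp (Complex.I * (φ x : ℝ)))
    (L : Matrix (Fin n → Bool) (Fin n → Bool) ℂ)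
    (hLoff : ∀ x y, hammingDist x y = 1 →
      L x y = ((1 / (n : ℝ) * (Real.sqrt (π x * π y) / (π x + π y)) : ℝ) : ℂ) *
        Complex.exp (Complex.I * ((φ x - φ y : ℝ) : ℂ)))
    (hLdiag : ∀ x, L x x = ((1 / (n : ℝ) *
      ∑ x' ∈ Finset.univ.filter (fun x' => hammingDist x x' = 1),
        π x / (π x + π x') : ℝ) : ℂ))
    (hLfar : ∀ x y, x ≠ y → hammingDist x y ≠ 1 → L x y = 0)
    (F : ℝ) (hF0 : 0 ≤ F) (hF1 : F ≤ 1)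
    (d : ℕ) (hd : d = 2 ^ n)
    (ρF : Matrix (Fin n → Bool) (Fin n → Bool) ℂ)
    (hρF : ρF = (F : ℂ) • Matrix.vecMulVec ψ (star ψ) +
      (((1 - F) / (d : ℝ) : ℝ) : ℂ) • (1 : Matrix (Fin n → Bool) (Fin n → Bool) ℂ)) :
    L.trace = ((d : ℝ) / 2 : ℝ) ∧ (L * ρF).trace = (((1 + F) / 2 : ℝ) : ℂ) :=
  stmt_18_general n hn π hπpos hπsum φ ψ hψ L hLoff hLdiag hLfar F d hd ρF hρF
end
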